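/- arXiv:2605.08358 — 8 statements merged into one kernel-verified Lean document; each statement's English description precedes it below -/
import Mathlib

section
/- Let γ > 0, let Q be an m×N real matrix with rows q_1,…,q_m (viewed as row vectors), and let R be a k×N real matrix. Then there exists an m×k real matrix L with Q = LR and ‖L‖_{2→∞} ≤ γ if and only if γ²·RᵀR ⪰ q_iᵀq_i for every i ∈ {1,…,m}. Moreover, if γ²·RᵀR ⪰ q_iᵀq_i for every i, then the matrix L = Q·R⁺, where R⁺ is the Moore–Penrose pseudoinverse of R, satisfies Q·R⁺·R = Q and ‖Q·R⁺‖_{2→∞} ≤ γ. -/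
/-!
The condition on row `q` of `Q` says `(q ⬝ᵥ x)² ≤ γ² ‖R x‖²` for all `x`. If `q = ℓ R`, this is
Cauchy–Schwarz applied to `q ⬝ᵥ x = ℓ ⬝ᵥ R x`. Conversely, the condition makes `q` orthogonal to
`ker R = ker (Rᵀ R)`, so `q = Rᵀ R y`; then `ℓ = R y` solves `ℓ R = q`, and testing the condition
at `x = y` gives `‖ℓ‖⁴ ≤ γ² ‖ℓ‖²`. For a pseudoinverse `P`, the Penrose identities give
`R (P Pᵀ qᵀ) = Pᵀ qᵀ` and `q ⬝ᵥ P Pᵀ qᵀ = ‖q P‖²`, so the same test bounds the rows of `Q P`.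
-/

open Matrix

/-- `‖M‖_{2→∞}`: the maximum ℓ2 norm of a row of `M`. -/
noncomputable def rowNorm2inf {α β : Type*} [Fintype α] [Fintype β] (M : Matrix α β ℝ) : ℝ :=
  ⨆ i, Real.sqrt (∑ j, (M i j) ^ 2)

/-- `P` satisfies the four Penrose conditions for `R`, i.e. `P` is the
Moore–Penrose pseudoinverse of `R`. -/
def IsMoorePenrose {k N : ℕ} (R : Matrix (Fin k) (Fin N) ℝ)
    (P : Matrix (Fin N) (Fin k) ℝ) : Prop :=
  R * P * R = R ∧ P * R * P = P ∧ (R * P)ᵀ = R * P ∧ (P * R)ᵀ = P * R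

section

variable {m n : Type*} [Fintype m] [Fintype n]

lemma sq_dotProduct_le (v w : n → ℝ) : (v ⬝ᵥ w) ^ 2 ≤ (v ⬝ᵥ v) * (w ⬝ᵥ w) := by
  simpa only [dotProduct, sq] using Finset.sum_mul_sq_le_sq_mul_sq Finset.univ v w

lemma rowNorm2inf_le_iff {M : Matrix m n ℝ} {γ : ℝ} (hγ : 0 ≤ γ) :
    rowNorm2inf M ≤ γ ↔ ∀ i, M i ⬝ᵥ M i ≤ γ ^ 2 := by
  have hrow (i : m) : √(∑ j, M i j ^ 2) ≤ γ ↔ M i ⬝ᵥ M i ≤ γ ^ 2 := by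
    simp only [Real.sqrt_le_left hγ, dotProduct, sq]
  exact ⟨fun h i => (hrow i).1 ((le_ciSup (Set.finite_range _).bddAbove i).trans h),
    fun h => Real.iSup_le (fun i => (hrow i).2 (h i)) hγ⟩

lemma dotProduct_mulVec_smul_gram_sub_vecMulVec (c : ℝ) (R : Matrix m n ℝ) (q x : n → ℝ) :
    x ⬝ᵥ ((c • (Rᵀ * R) - vecMulVec q q) *ᵥ x) =
      c * ((R *ᵥ x) ⬝ᵥ (R *ᵥ x)) - (q ⬝ᵥ x) ^ 2 := by
  rw [sub_mulVec, smul_mulVec, ← mulVec_mulVec, vecMulVec_mulVec, dotProduct_sub,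
    dotProduct_smul, dotProduct_mulVec, vecMul_transpose]
  simp [dotProduct_comm x q, sq]

lemma posSemidef_smul_gram_sub_vecMulVec_iff (c : ℝ) (R : Matrix m n ℝ) (q : n → ℝ) :
    (c • (Rᵀ * R) - vecMulVec q q).PosSemidef ↔
      ∀ x, (q ⬝ᵥ x) ^ 2 ≤ c * ((R *ᵥ x) ⬝ᵥ (R *ᵥ x)) := by
  have hherm : (c • (Rᵀ * R) - vecMulVec q q).IsHermitian := by
    rw [IsHermitian, conjTranspose_eq_transpose_of_trivial, transpose_sub, transpose_smul,
      transpose_mul, transpose_transpose, transpose_vecMulVec]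
  simp only [posSemidef_iff_dotProduct_mulVec, hherm, true_and, star_trivial,
    dotProduct_mulVec_smul_gram_sub_vecMulVec, sub_nonneg]

lemma exists_transpose_mul_self_mulVec_eq (R : Matrix m n ℝ) {q : n → ℝ}
    (hq : ∀ v, R *ᵥ v = 0 → q ⬝ᵥ v = 0) : ∃ y, (Rᵀ * R) *ᵥ y = q := by
  classical
  have hmem : WithLp.toLp 2 q ∈ (toEuclideanLin R).kerᗮ := by
    refine (Submodule.mem_orthogonal' _ _).2 fun v hv => ?_
    have hRv : R *ᵥ v.ofLp = 0 := by simpa [toLpLin_apply] using hv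
    simpa [EuclideanSpace.inner_eq_star_dotProduct, dotProduct_comm] using hq _ hRv
  rw [LinearMap.orthogonal_ker, ← LinearMap.range_adjoint_comp_self,
    ← toEuclideanLin_conjTranspose_eq_adjoint] at hmem
  obtain ⟨y, hy⟩ := hmem
  exact ⟨y.ofLp, by simpa [toLpLin_apply, mulVec_mulVec] using congrArg WithLp.ofLp hy⟩

variable {c : ℝ} {R : Matrix m n ℝ} {q : n → ℝ}

lemma dotProduct_self_le_of_forall_sq_dotProduct_le
    (h : ∀ x, (q ⬝ᵥ x) ^ 2 ≤ c * ((R *ᵥ x) ⬝ᵥ (R *ᵥ x))) (hc : 0 ≤ c) {x : n → ℝ}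
    {v : m → ℝ} (hRx : R *ᵥ x = v) (hqx : q ⬝ᵥ x = v ⬝ᵥ v) : v ⬝ᵥ v ≤ c := by
  have hsq : (v ⬝ᵥ v) ^ 2 ≤ c * (v ⬝ᵥ v) := by simpa [hRx, hqx] using h x
  have hv : 0 ≤ v ⬝ᵥ v := by simpa using dotProduct_self_star_nonneg v
  rcases hv.eq_or_lt with hv0 | hvpos
  · rwa [← hv0]
  · nlinarith

lemma exists_vecMul_eq_and_dotProduct_self_le_iff (hc : 0 ≤ c) :
    (∃ ℓ : m → ℝ, ℓ ᵥ* R = q ∧ ℓ ⬝ᵥ ℓ ≤ c) ↔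
      ∀ x, (q ⬝ᵥ x) ^ 2 ≤ c * ((R *ᵥ x) ⬝ᵥ (R *ᵥ x)) := by
  constructor
  · rintro ⟨ℓ, rfl, hℓ⟩ x
    rw [← dotProduct_mulVec]
    have hRx : 0 ≤ (R *ᵥ x) ⬝ᵥ (R *ᵥ x) := by simpa using dotProduct_self_star_nonneg (R *ᵥ x)
    exact (sq_dotProduct_le ℓ (R *ᵥ x)).trans (mul_le_mul_of_nonneg_right hℓ hRx)
  · intro h
    obtain ⟨y, hy⟩ := exists_transpose_mul_self_mulVec_eq R fun v hv => by simpa [hv] using h v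
    have hRy : (R *ᵥ y) ᵥ* R = q := by rw [← mulVec_transpose, mulVec_mulVec, hy]
    refine ⟨R *ᵥ y, hRy, dotProduct_self_le_of_forall_sq_dotProduct_le h hc rfl ?_⟩
    rw [← hRy, ← dotProduct_mulVec]

lemma dotProduct_self_vecMul_le (h : ∀ x, (q ⬝ᵥ x) ^ 2 ≤ c * ((R *ᵥ x) ⬝ᵥ (R *ᵥ x)))
    (hc : 0 ≤ c) {P : Matrix n m ℝ} (hPRP : P * R * P = P) (hRP : (R * P)ᵀ = R * P) :
    (q ᵥ* P) ⬝ᵥ (q ᵥ* P) ≤ c := by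
  refine dotProduct_self_le_of_forall_sq_dotProduct_le h hc (x := P *ᵥ (q ᵥ* P)) ?_
    (dotProduct_mulVec _ _ _)
  rw [mulVec_mulVec, ← hRP, mulVec_transpose, vecMul_vecMul, ← Matrix.mul_assoc, hPRP]

end

lemma exists_mul_eq_and_rowNorm2inf_le_iff {l m n : Type*} [Fintype l] [Fintype m]
    (R : Matrix l n ℝ) (Q : Matrix m n ℝ) {γ : ℝ} (hγ : 0 ≤ γ) :
    (∃ L : Matrix m l ℝ, L * R = Q ∧ rowNorm2inf L ≤ γ) ↔
      ∀ i, ∃ ℓ : l → ℝ, ℓ ᵥ* R = Q i ∧ ℓ ⬝ᵥ ℓ ≤ γ ^ 2 := by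
  simp only [rowNorm2inf_le_iff hγ]
  constructor
  · rintro ⟨L, rfl, hL⟩ i
    exact ⟨L i, (mul_apply_eq_vecMul L R i).symm, hL i⟩
  · intro h
    choose L hLR hL using h
    exact ⟨Matrix.of L, funext fun i => (mul_apply_eq_vecMul _ R i).trans (hLR i), hL⟩

theorem stmt0 {m N k : ℕ} (γ : ℝ) (hγ : 0 < γ)
    (Q : Matrix (Fin m) (Fin N) ℝ) (R : Matrix (Fin k) (Fin N) ℝ) :
    ((∃ L : Matrix (Fin m) (Fin k) ℝ, L * R = Q ∧ rowNorm2inf L ≤ γ) ↔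
      (∀ i : Fin m, (γ ^ 2 • (Rᵀ * R) - vecMulVec (Q i) (Q i)).PosSemidef)) ∧
    ((∀ i : Fin m, (γ ^ 2 • (Rᵀ * R) - vecMulVec (Q i) (Q i)).PosSemidef) →
      ∀ P : Matrix (Fin N) (Fin k) ℝ, IsMoorePenrose R P →
        Q * P * R = Q ∧ rowNorm2inf (Q * P) ≤ γ) := by
  have hγ2 : 0 ≤ γ ^ 2 := sq_nonneg γ
  have hchar : (∃ L : Matrix (Fin m) (Fin k) ℝ, L * R = Q ∧ rowNorm2inf L ≤ γ) ↔
      ∀ i : Fin m, (γ ^ 2 • (Rᵀ * R) - vecMulVec (Q i) (Q i)).PosSemidef := by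
    simp only [exists_mul_eq_and_rowNorm2inf_le_iff R Q hγ.le,
      exists_vecMul_eq_and_dotProduct_self_le_iff hγ2, posSemidef_smul_gram_sub_vecMulVec_iff]
  refine ⟨hchar, fun h P ⟨hRPR, hPRP, hRP, _⟩ => ⟨?_, ?_⟩⟩
  · obtain ⟨L, rfl, -⟩ := hchar.2 h
    rw [Matrix.mul_assoc L, Matrix.mul_assoc L, hRPR]
  · refine (rowNorm2inf_le_iff hγ.le).2 fun i => ?_
    rw [mul_apply_eq_vecMul]
    exact dotProduct_self_vecMul_le ((posSemidef_smul_gram_sub_vecMulVec_iff _ R _).1 (h i)) hγ2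
      hPRP hRP
end

section
/- For every m×N real matrix Q with rows q_1,…,q_m (viewed as row vectors), the following two infima are equal: inf{‖L‖_{2→∞}·‖R‖_F : k ∈ ℕ, L ∈ ℝ^{m×k}, R ∈ ℝ^{k×N}, LR = Q} = inf{√(tr X) : X an N×N positive semidefinite real matrix with X ⪰ q_iᵀq_i for all i ∈ {1,…,m}}. (The left-hand side equals the factorization norm γ_F(Qᵀ).) -/
/-!
Both quantities are the same convex program in two guises. A factorization `Q = L R` yields the
feasible matrix `X = ‖L‖²_{2→∞} RᵀR`: by Cauchy–Schwarz `(q_i · v)² = (L_i · Rv)² ≤ ‖L_i‖² ‖Rv‖²`,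
and `√(tr X) = ‖L‖_{2→∞} ‖R‖_F`. Conversely, for feasible `X` and `ε > 0` the matrix
`M = X + εI` is positive definite with `M ⪰ q_iᵀ q_i`, which forces `q_i M⁻¹ q_iᵀ ≤ 1`; writing
`M = RᵀR`, the factorization `Q = (Q M⁻¹ Rᵀ) R` has row norms `q_i M⁻¹ q_iᵀ ≤ 1` and
`‖R‖_F = √(tr X + εN)`. Letting `ε → 0` closes the gap.
-/

open Matrix

/-- `‖M‖_F`: the Frobenius norm of `M`. -/
noncomputable def frobNorm {α β : Type*} [Fintype α] [Fintype β] (M : Matrix α β ℝ) : ℝ :=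
  Real.sqrt (∑ i, ∑ j, (M i j) ^ 2)

open Filter Topology

variable {ι κ ν : Type*} [Fintype ι] [Fintype κ] [Fintype ν]

lemma rowNorm2inf_nonneg (L : Matrix ι κ ℝ) : 0 ≤ rowNorm2inf L :=
  Real.iSup_nonneg fun _ => Real.sqrt_nonneg _

lemma dotProduct_row_self_le_sq_rowNorm2inf (L : Matrix ι κ ℝ) (i : ι) :
    L i ⬝ᵥ L i ≤ rowNorm2inf L ^ 2 := by
  have h : √(∑ j, L i j ^ 2) ≤ rowNorm2inf L :=
    le_ciSup (f := fun i => √(∑ j, L i j ^ 2)) (Set.finite_range _).bddAbove i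
  rw [Real.sqrt_le_left (rowNorm2inf_nonneg L)] at h
  simpa [dotProduct, sq] using h

lemma rowNorm2inf_le_one {L : Matrix ι κ ℝ} (h : ∀ i, L i ⬝ᵥ L i ≤ 1) : rowNorm2inf L ≤ 1 :=
  Real.iSup_le (fun i => Real.sqrt_le_one.mpr (by simpa [dotProduct, sq] using h i)) zero_le_one

lemma frobNorm_eq_sqrt_trace (R : Matrix κ ν ℝ) : frobNorm R = √(Rᵀ * R).trace := by
  simp [frobNorm, Matrix.trace, mul_apply, sq, Finset.sum_comm (γ := κ)]

lemma sq_dotProduct_le_s1 (x y : κ → ℝ) : (x ⬝ᵥ y) ^ 2 ≤ (x ⬝ᵥ x) * (y ⬝ᵥ y) := by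
  simpa [dotProduct, sq] using Finset.sum_mul_sq_le_sq_mul_sq Finset.univ x y

lemma posSemidef_smul_one_sub_vecMulVec [DecidableEq κ] {l : κ → ℝ} {c : ℝ} (h : l ⬝ᵥ l ≤ c) :
    (c • 1 - vecMulVec l l).PosSemidef := by
  refine .of_dotProduct_mulVec_nonneg ?_ fun x => ?_
  · exact (isHermitian_one.smul (IsSelfAdjoint.all c)).sub
      (posSemidef_vecMulVec_self_star l).isHermitian
  · simp only [star_trivial, sub_mulVec, smul_mulVec, one_mulVec, vecMulVec_mulVec,
      dotProduct_sub, dotProduct_smul]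
    have hx : 0 ≤ x ⬝ᵥ x := by simpa using dotProduct_star_self_nonneg x
    rw [op_smul_eq_smul, smul_eq_mul, smul_eq_mul, dotProduct_comm x l]
    nlinarith [sq_dotProduct_le_s1 l x]

lemma posSemidef_sq_rowNorm2inf_smul_sub_vecMulVec (L : Matrix ι κ ℝ) (R : Matrix κ ν ℝ)
    (i : ι) : (rowNorm2inf L ^ 2 • (Rᵀ * R) - vecMulVec ((L * R) i) ((L * R) i)).PosSemidef := by
  classical
  have h := (posSemidef_smul_one_sub_vecMulVec
    (dotProduct_row_self_le_sq_rowNorm2inf L i)).conjTranspose_mul_mul_same R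
  rwa [conjTranspose_eq_transpose_of_trivial, Matrix.mul_sub, Matrix.sub_mul, Matrix.mul_smul,
    Matrix.mul_one, Matrix.smul_mul, mul_vecMulVec, vecMulVec_mul, mulVec_transpose] at h

lemma dotProduct_inv_mulVec_le_one [DecidableEq ν] {M : Matrix ν ν ℝ} (hM : IsUnit M.det)
    {q : ν → ℝ} (hq : (M - vecMulVec q q).PosSemidef) : q ⬝ᵥ M⁻¹ *ᵥ q ≤ 1 := by
  set w := M⁻¹ *ᵥ q
  have hMw : M *ᵥ w = q := by rw [mulVec_mulVec, mul_nonsing_inv M hM, one_mulVec]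
  -- with `s = q ⬝ᵥ w`, positivity of `M - q qᵀ` at `w` reads `s - s² ≥ 0`
  have := hq.dotProduct_mulVec_nonneg w
  rw [star_trivial, sub_mulVec, dotProduct_sub, hMw, vecMulVec_mulVec, op_smul_eq_smul,
    dotProduct_smul, smul_eq_mul, dotProduct_comm w q] at this
  nlinarith

open scoped MatrixOrder in
lemma exists_factorization_rowNorm2inf_le_one [DecidableEq ν] {M : Matrix ν ν ℝ} (hM : M.PosDef)
    (Q : Matrix ι ν ℝ) (hQ : ∀ i, (M - vecMulVec (Q i) (Q i)).PosSemidef) :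
    ∃ (L : Matrix ι ν ℝ) (R : Matrix ν ν ℝ), L * R = Q ∧ rowNorm2inf L ≤ 1 ∧ Rᵀ * R = M := by
  obtain ⟨R, hR⟩ := CStarAlgebra.nonneg_iff_eq_star_mul_self.mp hM.posSemidef.nonneg
  rw [star_eq_conjTranspose, conjTranspose_eq_transpose_of_trivial] at hR
  have hdet : IsUnit M.det := hM.isUnit.map detMonoidHom
  refine ⟨Q * M⁻¹ * Rᵀ, R, ?_, rowNorm2inf_le_one fun i => ?_, hR.symm⟩
  · rw [Matrix.mul_assoc, ← hR, nonsing_inv_mul_cancel_right _ _ hdet]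
  · have hMt : Mᵀ = M := by rw [← conjTranspose_eq_transpose_of_trivial, hM.isHermitian.eq]
    have hMinv : M⁻¹ᵀ = M⁻¹ := by rw [transpose_nonsing_inv, hMt]
    have hrow : (Q * M⁻¹ * Rᵀ) i = R *ᵥ (M⁻¹ *ᵥ Q i) := by
      change Q i ᵥ* M⁻¹ ᵥ* Rᵀ = _
      rw [vecMul_transpose, ← mulVec_transpose, hMinv]
    rw [hrow, dotProduct_mulVec, vecMul_mulVec, ← hR, ← mulVec_transpose, hMt, mulVec_mulVec,
      mul_nonsing_inv _ hdet, one_mulVec]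
    exact dotProduct_inv_mulVec_le_one hdet (hQ i)

lemma le_sqrt_trace_of_forall_pos_le [DecidableEq ν] {a : ℝ} {X : Matrix ν ν ℝ}
    (h : ∀ ε : ℝ, 0 < ε → a ≤ √(X + ε • 1).trace) : a ≤ √X.trace := by
  have hcont : Continuous fun ε : ℝ => √(X + ε • 1).trace := by
    simp only [trace_add, trace_smul, trace_one, smul_eq_mul]
    fun_prop
  have hlim : Tendsto (fun ε : ℝ => √(X + ε • 1).trace) (𝓝[>] 0) (𝓝 √X.trace) := by
    simpa using (hcont.tendsto 0).mono_left nhdsWithin_le_nhds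
  exact ge_of_tendsto hlim (eventually_nhdsWithin_of_forall h)

theorem stmt1 {m N : ℕ} (Q : Matrix (Fin m) (Fin N) ℝ) :
    sInf { c : ℝ | ∃ (k : ℕ) (L : Matrix (Fin m) (Fin k) ℝ) (R : Matrix (Fin k) (Fin N) ℝ),
        L * R = Q ∧ c = rowNorm2inf L * frobNorm R } =
    sInf { c : ℝ | ∃ X : Matrix (Fin N) (Fin N) ℝ, X.PosSemidef ∧
        (∀ i : Fin m, (X - vecMulVec (Q i) (Q i)).PosSemidef) ∧ c = Real.sqrt X.trace } := by
  set F := { c : ℝ | ∃ (k : ℕ) (L : Matrix (Fin m) (Fin k) ℝ) (R : Matrix (Fin k) (Fin N) ℝ),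
    L * R = Q ∧ c = rowNorm2inf L * frobNorm R }
  set S := { c : ℝ | ∃ X : Matrix (Fin N) (Fin N) ℝ, X.PosSemidef ∧
    (∀ i : Fin m, (X - vecMulVec (Q i) (Q i)).PosSemidef) ∧ c = Real.sqrt X.trace }
  have hFS : F ⊆ S := by
    rintro _ ⟨k, L, R, rfl, rfl⟩
    refine ⟨rowNorm2inf L ^ 2 • (Rᵀ * R), ?_,
      posSemidef_sq_rowNorm2inf_smul_sub_vecMulVec L R, ?_⟩
    · simpa using (posSemidef_conjTranspose_mul_self R).smul (sq_nonneg (rowNorm2inf L))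
    · rw [trace_smul, smul_eq_mul, Real.sqrt_mul (sq_nonneg _),
        Real.sqrt_sq (rowNorm2inf_nonneg L), frobNorm_eq_sqrt_trace]
  have hF : F.Nonempty := ⟨_, N, Q, 1, Matrix.mul_one Q, rfl⟩
  have hS : BddBelow S := ⟨0, by rintro _ ⟨X, -, -, rfl⟩; exact Real.sqrt_nonneg _⟩
  refine le_antisymm (le_csInf (hF.mono hFS) ?_) (csInf_le_csInf hS hF hFS)
  rintro _ ⟨X, hX, hXQ, rfl⟩
  refine le_sqrt_trace_of_forall_pos_le fun ε hε => ?_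
  obtain ⟨L, R, hLR, hL, hR⟩ := exists_factorization_rowNorm2inf_le_one
    (PosDef.posSemidef_add hX (PosDef.one.smul hε)) Q fun i => by
      simpa only [add_sub_right_comm] using (hXQ i).add (PosSemidef.one.smul hε.le)
  calc sInf F ≤ rowNorm2inf L * frobNorm R := csInf_le (hS.mono hFS) ⟨N, L, R, hLR, rfl⟩
    _ ≤ frobNorm R := mul_le_of_le_one_left (Real.sqrt_nonneg _) hL
    _ = √(X + ε • 1).trace := by rw [frobNorm_eq_sqrt_trace, hR]
end

section
/- Let q_1,…,q_m be row vectors in ℝ^N, let y_1,…,y_m ≥ 0 be real numbers with ∑_{i=1}^m y_i ≤ 1, and let X be an N×N positive semidefinite real matrix with X ⪰ q_iᵀq_i for all i ∈ {1,…,m}. Then tr(√(∑_{i=1}^m y_i·q_iᵀq_i))² ≤ tr(X), where √(·) denotes the positive semidefinite matrix square root. -/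
/-! Write `A = ∑ i, yᵢ qᵢ qᵢᵀ` and `S = √A`. For positive definite `X`, Cauchy–Schwarz for the
inner product `⟪P, Q⟫ = tr (Q X⁻¹ Pᵀ)` gives `(tr S)² = ⟪X, S⟫² ≤ tr X · tr (S X⁻¹ S) =
tr X · tr (A X⁻¹)`, and `tr (A X⁻¹) = ∑ i, yᵢ qᵢᵀ X⁻¹ qᵢ ≤ ∑ i, yᵢ ≤ 1` because `X ⪰ q qᵀ` forces
`qᵀ X⁻¹ q ≤ 1`. A singular `X` is approximated by `X + δ I`, `δ → 0`. -/

open Matrix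

section

open scoped ComplexOrder

/-- The matrix square root of a positive semidefinite matrix, as defined in the older Mathlib
(`Matrix.PosSemidef.sqrt`, removed since). -/
noncomputable def Matrix.PosSemidef.sqrt {n 𝕜 : Type*} [Fintype n] [DecidableEq n] [RCLike 𝕜]
    {A : Matrix n n 𝕜} (hA : A.PosSemidef) : Matrix n n 𝕜 :=
  hA.1.eigenvectorUnitary.1 * diagonal ((↑) ∘ (√·) ∘ hA.1.eigenvalues) *
    (star hA.1.eigenvectorUnitary : Matrix n n 𝕜)

end

section

open scoped ComplexOrder

variable {n 𝕜 : Type*} [Fintype n] [DecidableEq n] [RCLike 𝕜] {A : Matrix n n 𝕜}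

lemma Matrix.PosSemidef.sqrt_mul_self (hA : A.PosSemidef) : hA.sqrt * hA.sqrt = A := by
  conv_rhs => rw [hA.1.spectral_theorem, Unitary.conjStarAlgAut_apply]
  have hU : (star hA.1.eigenvectorUnitary : Matrix n n 𝕜) * hA.1.eigenvectorUnitary.1 = 1 :=
    Unitary.coe_star_mul_self _
  simp only [Matrix.PosSemidef.sqrt]
  rw [show ∀ a b c d e f : Matrix n n 𝕜, a * b * c * (d * e * f) = a * (b * (c * d) * e) * f by
    intros; simp only [mul_assoc], hU, mul_one, diagonal_mul_diagonal]
  congr 3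
  funext i
  simp only [Function.comp_apply]
  rw [← RCLike.ofReal_mul, Real.mul_self_sqrt (hA.eigenvalues_nonneg i)]

lemma Matrix.PosSemidef.posSemidef_sqrt (hA : A.PosSemidef) : hA.sqrt.PosSemidef := by
  have hD : (diagonal ((↑) ∘ (√·) ∘ hA.1.eigenvalues) : Matrix n n 𝕜).PosSemidef :=
    posSemidef_diagonal_iff.mpr fun i => by
      simpa only [Function.comp_apply, RCLike.ofReal_nonneg] using Real.sqrt_nonneg _
  simpa [Matrix.PosSemidef.sqrt, Matrix.star_eq_conjTranspose] using
    hD.mul_mul_conjTranspose_same (hA.1.eigenvectorUnitary : Matrix n n 𝕜)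

end

namespace Matrix.PosDef

variable {n : Type*} [Fintype n] [DecidableEq n] {X : Matrix n n ℝ}

theorem trace_sq_le_trace_mul_trace_mul_inv_mul (hX : X.PosDef) (S : Matrix n n ℝ) :
    S.trace ^ 2 ≤ X.trace * (S * X⁻¹ * Sᴴ).trace := by
  let _ := X⁻¹.toMatrixSeminormedAddCommGroup hX.inv.posSemidef
  let _ := X⁻¹.toMatrixInnerProductSpace hX.inv.posSemidef
  have hdet : IsUnit X.det := (isUnit_iff_isUnit_det X).mp hX.isUnit
  have key : (S * X⁻¹ * Xᴴ).trace * (S * X⁻¹ * Xᴴ).trace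
      ≤ (X * X⁻¹ * Xᴴ).trace * (S * X⁻¹ * Sᴴ).trace :=
    real_inner_mul_inner_self_le X S
  rwa [hX.isHermitian.eq, nonsing_inv_mul_cancel_right _ _ hdet,
    nonsing_inv_mul_cancel_right _ _ hdet, ← sq] at key

theorem dotProduct_inv_mulVec_le_one (hX : X.PosDef) {q : n → ℝ}
    (hXq : (X - vecMulVec q q).PosSemidef) : q ⬝ᵥ (X⁻¹ *ᵥ q) ≤ 1 := by
  set v := X⁻¹ *ᵥ q
  have hXv : X *ᵥ v = q := by
    rw [mulVec_mulVec, mul_nonsing_inv _ ((isUnit_iff_isUnit_det X).mp hX.isUnit), one_mulVec]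
  -- `0 ≤ vᵀ (X - q qᵀ) v = t - t²` with `t = q ⬝ᵥ v`
  have h := hXq.dotProduct_mulVec_nonneg v
  rw [sub_mulVec, hXv, vecMulVec_mulVec, op_smul_eq_smul, star_trivial, dotProduct_sub,
    dotProduct_smul, smul_eq_mul, dotProduct_comm v q] at h
  nlinarith

theorem trace_sqrt_sq_le_trace {ι : Type*} [Fintype ι] (q : ι → n → ℝ) (y : ι → ℝ)
    (hy : ∀ i, 0 ≤ y i) (hy1 : ∑ i, y i ≤ 1)
    (hM : (∑ i, y i • vecMulVec (q i) (q i)).PosSemidef) (hX : X.PosDef)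
    (hXq : ∀ i, (X - vecMulVec (q i) (q i)).PosSemidef) :
    hM.sqrt.trace ^ 2 ≤ X.trace := by
  set S := hM.sqrt
  have hS : Sᴴ = S := hM.posSemidef_sqrt.isHermitian
  have hquad : (S * X⁻¹ * Sᴴ).trace = ∑ i, y i * (q i ⬝ᵥ (X⁻¹ *ᵥ q i)) := by
    rw [hS, trace_mul_cycle, hM.sqrt_mul_self, Finset.sum_mul, trace_sum]
    refine Finset.sum_congr rfl fun i _ => ?_
    rw [smul_mul_assoc, trace_smul, vecMulVec_mul, trace_vecMulVec, dotProduct_mulVec,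
      dotProduct_comm, smul_eq_mul]
  calc S.trace ^ 2 ≤ X.trace * (S * X⁻¹ * Sᴴ).trace :=
        hX.trace_sq_le_trace_mul_trace_mul_inv_mul S
    _ ≤ X.trace * 1 := by
      gcongr
      · exact hX.posSemidef.trace_nonneg
      rw [hquad]
      calc ∑ i, y i * (q i ⬝ᵥ (X⁻¹ *ᵥ q i)) ≤ ∑ i, y i :=
            Finset.sum_le_sum fun i _ => mul_le_of_le_one_right (hy i)
              (hX.dotProduct_inv_mulVec_le_one (hXq i))
        _ ≤ 1 := hy1
    _ = X.trace := mul_one _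

end Matrix.PosDef

theorem stmt2 {m N : ℕ} (q : Fin m → (Fin N → ℝ)) (y : Fin m → ℝ)
    (hy : ∀ i, 0 ≤ y i) (hy1 : ∑ i, y i ≤ 1)
    (hM : (∑ i, y i • vecMulVec (q i) (q i)).PosSemidef)
    (X : Matrix (Fin N) (Fin N) ℝ) (hX : X.PosSemidef)
    (hXq : ∀ i, (X - vecMulVec (q i) (q i)).PosSemidef) :
    hM.sqrt.trace ^ 2 ≤ X.trace := by
  have hperturb : ∀ δ : ℝ, 0 < δ → hM.sqrt.trace ^ 2 ≤ X.trace + δ * N := by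
    intro δ hδ
    have hXδ : (X + δ • 1).PosDef := .posSemidef_add hX (.smul .one hδ)
    have hXδq i : (X + δ • 1 - vecMulVec (q i) (q i)).PosSemidef := by
      rw [add_sub_right_comm]
      exact (hXq i).add (.smul .one hδ.le)
    simpa [trace_add, trace_smul] using hXδ.trace_sqrt_sq_le_trace q y hy hy1 hM hXδq
  refine le_of_forall_pos_le_add fun ε hε => (hperturb (ε / (N + 1)) (by positivity)).trans ?_
  gcongr
  rw [div_mul_eq_mul_div, div_le_iff₀ (by positivity)]
  nlinarith
end

section
/- Let C, γ > 0, let N, m ∈ ℕ, let q_1,…,q_m be row vectors in ℝ^N, and let X_0 ⪯ X_1 ⪯ … ⪯ X_m be N×N positive semidefinite matrices such that for each t ∈ {1,…,m}, X_t ⪰ q_tᵀq_t and tr(X_t) ≤ C²γ²N. Then there exist real matrices R_0, R_1, …, R_m, each with N columns, such that for every t ∈ {1,…,m}: R_t is obtained from R_{t−1} by appending rows at the bottom, R_tᵀR_t = (1/(C²γ²))·X_t, ‖R_t‖_F ≤ √N, and there exists a row vector ℓ_t (with one coordinate per row of R_t) with ℓ_t·R_t = q_t and ‖ℓ_t‖_2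 ≤ Cγ. -/
/-!
Write `X_0` and the increments `X_s - X_{s-1}` as `B_sᵀ B_s`, and let `R_t` stack the blocks
`B_0 / (Cγ), …, B_t / (Cγ)`. Then `R_tᵀ R_t = X_t / (C²γ²)`, passing from `R_{t-1}` to `R_t` only
appends rows, and `‖R_t‖_F² = tr X_t / (C²γ²) ≤ N`.
Since `X_t ⪰ q_tᵀ q_t`, the vector `q_t` is orthogonal to the kernel of the symmetric matrix `X_t`,
so `q_t = X_t u` for some `u`. Then `ℓ_t = C²γ² R_t u` satisfies `ℓ_t R_t = q_t` and
`‖ℓ_t‖² = C²γ² ⟨u, q_t⟩ ≤ C²γ²`, because `⟨u, q_t⟩ - ⟨u, q_t⟩² = uᵀ (X_t - q_tᵀ q_t) u ≥ 0`.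
-/

open Matrix Finset
open scoped ComplexOrder

theorem Finset.sum_range_mul_eq_sum_sum {M : Type*} [AddCommMonoid M] (f : ℕ → M)
    (a b : ℕ) : ∑ i ∈ range (a * b), f i = ∑ s ∈ range a, ∑ r ∈ range b, f (s * b + r) := by
  induction a with
  | zero => simp
  | succ a ih => rw [Nat.succ_mul, sum_range_add, ih, sum_range_succ]

namespace Matrix

variable {n : Type*} [Fintype n]

theorem PosSemidef.exists_eq_conjTranspose_mul_self {𝕜 : Type*} [RCLike 𝕜] [DecidableEq n]
    {A : Matrix n n 𝕜} (hA : A.PosSemidef) : ∃ B : Matrix n n 𝕜, A = Bᴴ * B := by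
  open scoped MatrixOrder in
  exact CStarAlgebra.nonneg_iff_eq_star_mul_self.mp hA.nonneg

theorem exists_eq_sum_range_conjTranspose_mul_self {𝕜 : Type*} [RCLike 𝕜] [DecidableEq n]
    {m : ℕ} {X : ℕ → Matrix n n 𝕜} (h0 : (X 0).PosSemidef)
    (hmono : ∀ t, 1 ≤ t → t ≤ m → (X t - X (t - 1)).PosSemidef) :
    ∃ B : ℕ → Matrix n n 𝕜, ∀ t ≤ m, X t = ∑ s ∈ range (t + 1), (B s)ᴴ * B s := by
  have hinc : ∀ s, ∃ B : Matrix n n 𝕜,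
      s ≤ m → X s - (if s = 0 then 0 else X (s - 1)) = Bᴴ * B := by
    rintro (_ | s)
    · simpa using h0.exists_eq_conjTranspose_mul_self
    · by_cases hs : s + 1 ≤ m
      · simpa [hs] using (hmono (s + 1) (by omega) hs).exists_eq_conjTranspose_mul_self
      · exact ⟨0, fun h => absurd h hs⟩
  choose B hB using hinc
  refine ⟨B, fun t ht => ?_⟩
  induction t with
  | zero => simpa using hB 0 ht
  | succ t ih =>
    rw [sum_range_succ, ← ih (by omega), ← hB (t + 1) ht]
    simp

theorem IsHermitian.exists_mulVec_eq_of_posSemidef_sub_vecMulVec {G : Matrix n n ℝ}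
    {q : n → ℝ} (hG : G.IsHermitian) (h : (G - vecMulVec q q).PosSemidef) :
    ∃ u, G *ᵥ u = q := by
  classical
  have hker : ∀ b, G *ᵥ b = 0 → b ⬝ᵥ q = 0 := by
    intro b hb
    have := h.dotProduct_mulVec_nonneg b
    simp only [sub_mulVec, hb, vecMulVec_mulVec, op_smul_eq_smul, zero_sub, dotProduct_neg,
      dotProduct_smul, star_trivial, smul_eq_mul, dotProduct_comm q b] at this
    nlinarith
  have hq : WithLp.toLp 2 q ∈ LinearMap.range G.toEuclideanLin := by
    rw [← Submodule.orthogonal_orthogonal (LinearMap.range _),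
      (isSymmetric_toEuclideanLin_iff.mpr hG).orthogonal_range, Submodule.mem_orthogonal]
    intro b hb
    simpa [EuclideanSpace.inner_eq_star_dotProduct, dotProduct_comm] using
      hker b.ofLp (by simpa using congrArg WithLp.ofLp hb)
  obtain ⟨u, hu⟩ := hq
  exact ⟨u.ofLp, by simpa using congrArg WithLp.ofLp hu⟩

theorem sum_vecMulVec_self_mulVec {R ι : Type*} [CommSemiring R] (s : Finset ι) (r : ι → n → R)
    (u : n → R) :
    (∑ i ∈ s, vecMulVec (r i) (r i)) *ᵥ u = ∑ i ∈ s, (r i ⬝ᵥ u) • r i := by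
  simp [sum_mulVec, vecMulVec_mulVec]

theorem trace_sum_vecMulVec_self {R ι : Type*} [CommSemiring R] (s : Finset ι)
    (r : ι → n → R) : (∑ i ∈ s, vecMulVec (r i) (r i)).trace = ∑ i ∈ s, ∑ j, r i j ^ 2 := by
  simp [trace_sum, trace_vecMulVec, dotProduct, sq]

theorem exists_sum_smul_eq_of_posSemidef_smul_sum_vecMulVec_sub {ι : Type*} (s : Finset ι)
    (r : ι → n → ℝ) {a : ℝ} (ha : 0 ≤ a) {q : n → ℝ}
    (h : (a • ∑ i ∈ s, vecMulVec (r i) (r i) - vecMulVec q q).PosSemidef) :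
    ∃ ℓ : ι → ℝ, ∑ i ∈ s, ℓ i • r i = q ∧ ∑ i ∈ s, ℓ i ^ 2 ≤ a := by
  have hG : (a • ∑ i ∈ s, vecMulVec (r i) (r i)).IsHermitian :=
    ((posSemidef_sum s fun i _ => by simpa using posSemidef_vecMulVec_self_star (r i)).smul ha).1
  obtain ⟨u, hu⟩ := hG.exists_mulVec_eq_of_posSemidef_sub_vecMulVec h
  rw [smul_mulVec, sum_vecMulVec_self_mulVec] at hu
  refine ⟨fun i => a * (r i ⬝ᵥ u), by simpa [smul_sum, smul_smul] using hu, ?_⟩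
  have hα : 0 ≤ u ⬝ᵥ q - (u ⬝ᵥ q) ^ 2 := by
    have := h.dotProduct_mulVec_nonneg u
    rw [sub_mulVec, smul_mulVec, sum_vecMulVec_self_mulVec, hu, vecMulVec_mulVec] at this
    simpa [dotProduct_comm q u, sq] using this
  have hsum : ∑ i ∈ s, (a * (r i ⬝ᵥ u)) ^ 2 = a * (u ⬝ᵥ q) := by
    rw [← hu, dotProduct_smul, dotProduct_sum, smul_eq_mul, mul_sum, mul_sum]
    refine sum_congr rfl fun i _ => ?_
    rw [dotProduct_smul, dotProduct_comm u, smul_eq_mul]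
    ring
  rw [hsum]
  exact mul_le_of_le_one_right ha (by nlinarith)

variable {R : Type*} {N : ℕ}

/-- Row `i` is row `i % N` of block `i / N`; the column index witnesses `0 < N`. -/
def stackRows (B : ℕ → Matrix (Fin N) (Fin N) R) (i : ℕ) : Fin N → R :=
  fun j => B (i / N) ⟨i % N, Nat.mod_lt i j.pos⟩ j

theorem stackRows_mul_add (B : ℕ → Matrix (Fin N) (Fin N) R) {s r : ℕ} (hr : r < N) :
    stackRows B (s * N + r) = B s ⟨r, hr⟩ := by
  have hdiv : (s * N + r) / N = s := by
    rw [Nat.mul_comm, Nat.mul_add_div (by omega), Nat.div_eq_of_lt hr, Nat.add_zero]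
  have hmod : (s * N + r) % N = r := Nat.mul_add_mod_of_lt hr
  ext j
  simp only [stackRows, hdiv, hmod]

theorem sum_range_mul_vecMulVec_stackRows [CommSemiring R] (B : ℕ → Matrix (Fin N) (Fin N) R)
    (a : ℕ) : ∑ i ∈ range (a * N), vecMulVec (stackRows B i) (stackRows B i) =
      ∑ s ∈ range a, (B s)ᵀ * B s := by
  rw [sum_range_mul_eq_sum_sum]
  refine sum_congr rfl fun s _ => ?_
  rw [sum_range fun r => vecMulVec (stackRows B (s * N + r)) (stackRows B (s * N + r))]
  ext j j'
  simp [stackRows_mul_add, sum_apply, vecMulVec_apply, mul_apply]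

end Matrix

/-- The matrices `R_t` are encoded by a row count `k t` together with the rows
`Rrow t 0, …, Rrow t (k t - 1)` (each a row vector in `ℝ^N`). -/
theorem stmt5 {N m : ℕ} (C γ : ℝ) (hC : 0 < C) (hγ : 0 < γ)
    (q : ℕ → (Fin N → ℝ)) (X : ℕ → Matrix (Fin N) (Fin N) ℝ)
    (hpsd : ∀ t ≤ m, (X t).PosSemidef)
    (hmono : ∀ t, 1 ≤ t → t ≤ m → (X t - X (t - 1)).PosSemidef)
    (hdom : ∀ t, 1 ≤ t → t ≤ m → (X t - vecMulVec (q t) (q t)).PosSemidef)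
    (htr : ∀ t, 1 ≤ t → t ≤ m → (X t).trace ≤ C ^ 2 * γ ^ 2 * N) :
    ∃ (k : ℕ → ℕ) (Rrow : ℕ → ℕ → (Fin N → ℝ)),
      ∀ t, 1 ≤ t → t ≤ m →
        -- `R_t` is obtained from `R_{t-1}` by appending rows at the bottom
        (k (t - 1) ≤ k t) ∧
        (∀ i < k (t - 1), Rrow t i = Rrow (t - 1) i) ∧
        -- `R_tᵀ R_t = (1/(C²γ²)) • X_t`
        (∀ j j' : Fin N, ∑ i ∈ Finset.range (k t), Rrow t i j * Rrow t i j' =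
          (1 / (C ^ 2 * γ ^ 2)) * X t j j') ∧
        -- `‖R_t‖_F ≤ √N`
        Real.sqrt (∑ i ∈ Finset.range (k t), ∑ j, (Rrow t i j) ^ 2) ≤ Real.sqrt N ∧
        -- there is a row vector `ℓ_t` with `ℓ_t R_t = q_t` and `‖ℓ_t‖₂ ≤ Cγ`
        ∃ ℓ : ℕ → ℝ, (∀ j, ∑ i ∈ Finset.range (k t), ℓ i * Rrow t i j = q t j) ∧
          Real.sqrt (∑ i ∈ Finset.range (k t), (ℓ i) ^ 2) ≤ C * γ := by
  have hc : 0 < C ^ 2 * γ ^ 2 := by positivity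
  obtain ⟨B, hB⟩ := exists_eq_sum_range_conjTranspose_mul_self (hpsd 0 m.zero_le) hmono
  set r := stackRows fun s => (C * γ)⁻¹ • B s
  have hgram : ∀ t ≤ m,
      (C ^ 2 * γ ^ 2) • ∑ i ∈ range ((t + 1) * N), vecMulVec (r i) (r i) = X t := by
    intro t ht
    rw [sum_range_mul_vecMulVec_stackRows, hB t ht, smul_sum]
    refine sum_congr rfl fun s _ => ?_
    rw [conjTranspose_eq_transpose_of_trivial, transpose_smul, smul_mul_smul_comm, smul_smul,
      show C ^ 2 * γ ^ 2 * ((C * γ)⁻¹ * (C * γ)⁻¹) = 1 by field_simp, one_smul]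
  refine ⟨fun t => (t + 1) * N, fun _ => r, fun t ht1 htm =>
    ⟨Nat.mul_le_mul_right N (by omega), fun _ _ => rfl, fun j j' => ?_, ?_, ?_⟩⟩
  · have hentry := congrFun (congrFun (hgram t htm) j) j'
    simp only [Matrix.smul_apply, Matrix.sum_apply, vecMulVec_apply, smul_eq_mul] at hentry
    rw [← hentry]
    field_simp
  · have hfrob := congrArg trace (hgram t htm)
    rw [trace_smul, trace_sum_vecMulVec_self, smul_eq_mul] at hfrob
    exact Real.sqrt_le_sqrt (le_of_mul_le_mul_left (hfrob ▸ htr t ht1 htm) hc)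
  · obtain ⟨ℓ, hℓ, hℓa⟩ := exists_sum_smul_eq_of_posSemidef_smul_sum_vecMulVec_sub
      (range ((t + 1) * N)) r hc.le (q := q t) (by rw [hgram t htm]; exact hdom t ht1 htm)
    refine ⟨ℓ, fun j => by simpa [Finset.sum_apply] using congrFun hℓ j, ?_⟩
    exact Real.sqrt_le_iff.mpr ⟨by positivity, by linarith⟩
end

section
/- Let N be a power of 2, let H be an N×N Hadamard matrix with rows h_1,…,h_N, and let Q be the N×N matrix with rows q_t = 2^{(t−1)/2}·h_t; for t ∈ {1,…,N} let Q_t be the t×N matrix with rows q_1,…,q_t. Then ‖q_1‖_∞ = 1, (N−1)/2 ≤ log₂(γ2(Q)) ≤ N/2, and for every real matrix R with N columns and ‖R‖_{1→2} ≤ 1 and all row vectors ℓ_1,…,ℓ_N (each with one coordinate per row of R) satisfying ℓ_t·R = q_t for every t ∈ {1,…,N}, there exists t ∈ {1,…,N} with ‖ℓ_t‖_2 ≥ √(N/2)·γ2(Q_t); in particular ‖ℓ_t‖_2 ≥ √(log₂(γ2(Q)))·γ2(Q_t) for this t. -/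
/-!
Any factorization `A = L R` gives `|A i j| ≤ ‖row i of L‖ ‖col j of R‖` by Cauchy–Schwarz, and
`A = I A` is a factorization, so `max |A i j| ≤ γ₂(A) ≤ ‖A‖_{1→2}`. Row `i` of `Q` (indexed from
`0`) is `√2 ^ i` times a sign vector, so `√2 ^ (N-1) ≤ γ₂(Q) ≤ √2 ^ N` and `γ₂(Q_t) ≤ √2 ^ (t+1)`.

For the online bound put `w_t = R h_tᵀ`. Since `HᵀH = N I`, `∑ₜ ‖w_t‖² = N ‖R‖_F² ≤ N²`, so some
`‖w_t‖ ≤ √N`; and `⟪ℓ_t, w_t⟫ = q_t h_tᵀ = √2 ^ t N`, so Cauchy–Schwarz gives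
`‖ℓ_t‖ ≥ √2 ^ t √N ≥ √(N/2) γ₂(Q_t)`.
-/

open Matrix

/-- `‖M‖_{1→2}`: the maximum ℓ2 norm of a column of `M`. -/
noncomputable def colNorm12 {α β : Type*} [Fintype α] [Fintype β] (M : Matrix α β ℝ) : ℝ :=
  ⨆ j, Real.sqrt (∑ i, (M i j) ^ 2)

/-- The γ₂ factorization norm. -/
noncomputable def gamma2 {α β : Type*} [Fintype α] [Fintype β] (A : Matrix α β ℝ) : ℝ :=
  sInf { c : ℝ | ∃ (k : ℕ) (L : Matrix α (Fin k) ℝ) (R : Matrix (Fin k) β ℝ),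
    L * R = A ∧ c = rowNorm2inf L * colNorm12 R }

section FactorizationNorm

variable {α β : Type*} [Fintype α] [Fintype β]

lemma sqrt_sum_sq_le_rowNorm2inf (M : Matrix α β ℝ) (i : α) :
    √(∑ j, M i j ^ 2) ≤ rowNorm2inf M :=
  le_ciSup (f := fun i => √(∑ j, M i j ^ 2)) (Set.finite_range _).bddAbove i

lemma sqrt_sum_sq_le_colNorm12 (M : Matrix α β ℝ) (j : β) :
    √(∑ i, M i j ^ 2) ≤ colNorm12 M :=
  le_ciSup (f := fun j => √(∑ i, M i j ^ 2)) (Set.finite_range _).bddAbove j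

lemma rowNorm2inf_nonneg_s9 (M : Matrix α β ℝ) : 0 ≤ rowNorm2inf M :=
  Real.iSup_nonneg fun _ => Real.sqrt_nonneg _

lemma colNorm12_nonneg (M : Matrix α β ℝ) : 0 ≤ colNorm12 M :=
  Real.iSup_nonneg fun _ => Real.sqrt_nonneg _

lemma rowNorm2inf_le_sqrt {M : Matrix α β ℝ} {c : ℝ} (h : ∀ i, ∑ j, M i j ^ 2 ≤ c) :
    rowNorm2inf M ≤ √c :=
  Real.iSup_le (fun i => Real.sqrt_le_sqrt (h i)) (Real.sqrt_nonneg _)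

lemma colNorm12_le_sqrt {M : Matrix α β ℝ} {c : ℝ} (h : ∀ j, ∑ i, M i j ^ 2 ≤ c) :
    colNorm12 M ≤ √c :=
  Real.iSup_le (fun j => Real.sqrt_le_sqrt (h j)) (Real.sqrt_nonneg _)

lemma sum_dotProduct_self_le_card_of_colNorm12_le_one {R : Matrix α β ℝ}
    (hR : colNorm12 R ≤ 1) : ∑ a, R a ⬝ᵥ R a ≤ Fintype.card β := by
  simp only [dotProduct, ← sq]
  rw [Finset.sum_comm]
  calc ∑ j, ∑ a, R a j ^ 2 ≤ ∑ _j : β, (1 : ℝ) :=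
        Finset.sum_le_sum fun j _ =>
          Real.sqrt_le_one.mp ((sqrt_sum_sq_le_colNorm12 R j).trans hR)
    _ = Fintype.card β := by simp

lemma gamma2_nonneg (A : Matrix α β ℝ) : 0 ≤ gamma2 A := by
  apply Real.sInf_nonneg
  rintro c ⟨k, L, R, -, rfl⟩
  exact mul_nonneg (rowNorm2inf_nonneg_s9 L) (colNorm12_nonneg R)

lemma gamma2_le_of_mul_eq {k : ℕ} {A : Matrix α β ℝ} (L : Matrix α (Fin k) ℝ)
    (R : Matrix (Fin k) β ℝ) (hLR : L * R = A) : gamma2 A ≤ rowNorm2inf L * colNorm12 R := by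
  refine csInf_le ⟨0, ?_⟩ ⟨k, L, R, hLR, rfl⟩
  rintro c ⟨k, L, R, -, rfl⟩
  exact mul_nonneg (rowNorm2inf_nonneg_s9 L) (colNorm12_nonneg R)

lemma exists_mul_eq_rowNorm2inf_le_one (A : Matrix α β ℝ) :
    ∃ (k : ℕ) (L : Matrix α (Fin k) ℝ) (R : Matrix (Fin k) β ℝ),
      L * R = A ∧ rowNorm2inf L ≤ 1 ∧ colNorm12 R = colNorm12 A := by
  classical
  let e := (Fintype.equivFin α).symm
  refine ⟨Fintype.card α, (1 : Matrix α α ℝ).submatrix id e, A.submatrix e id, ?_, ?_, ?_⟩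
  · rw [submatrix_mul_equiv, Matrix.one_mul, submatrix_id_id]
  · rw [← Real.sqrt_one]
    refine rowNorm2inf_le_sqrt fun i => le_of_eq ?_
    refine (e.sum_comp fun b => (1 : Matrix α α ℝ) i b ^ 2).trans ?_
    simp [one_apply]
  · unfold colNorm12
    congr 1
    funext j
    exact congrArg Real.sqrt (e.sum_comp fun a => A a j ^ 2)

lemma gamma2_le_colNorm12 (A : Matrix α β ℝ) : gamma2 A ≤ colNorm12 A := by
  obtain ⟨k, L, R, hLR, hL, hR⟩ := exists_mul_eq_rowNorm2inf_le_one A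
  calc gamma2 A ≤ rowNorm2inf L * colNorm12 R := gamma2_le_of_mul_eq L R hLR
    _ ≤ 1 * colNorm12 A := by rw [hR]; gcongr; exact colNorm12_nonneg A
    _ = colNorm12 A := one_mul _

lemma abs_apply_le_gamma2 (A : Matrix α β ℝ) (i : α) (j : β) : |A i j| ≤ gamma2 A := by
  obtain ⟨k, L, R, hLR, -⟩ := exists_mul_eq_rowNorm2inf_le_one A
  refine le_csInf ⟨_, k, L, R, hLR, rfl⟩ ?_
  rintro c ⟨k, L, R, rfl, rfl⟩
  calc |(L * R) i j| = √((∑ a, L i a * R a j) ^ 2) := by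
        rw [Real.sqrt_sq_eq_abs, mul_apply]
    _ ≤ √((∑ a, L i a ^ 2) * ∑ a, R a j ^ 2) :=
        Real.sqrt_le_sqrt (Finset.sum_mul_sq_le_sq_mul_sq _ _ _)
    _ = √(∑ a, L i a ^ 2) * √(∑ a, R a j ^ 2) := Real.sqrt_mul (by positivity) _
    _ ≤ rowNorm2inf L * colNorm12 R :=
        mul_le_mul (sqrt_sum_sq_le_rowNorm2inf L i) (sqrt_sum_sq_le_colNorm12 R j)
          (Real.sqrt_nonneg _) (rowNorm2inf_nonneg_s9 L)

end FactorizationNorm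

section Hadamard

variable {m n κ : Type*} [Fintype m] [Fintype n] [Fintype κ]

lemma dotProduct_le_sqrt_mul_sqrt (v w : n → ℝ) : v ⬝ᵥ w ≤ √(v ⬝ᵥ v) * √(w ⬝ᵥ w) := by
  simpa only [dotProduct, sq] using Real.sum_mul_le_sqrt_mul_sqrt Finset.univ v w

lemma dotProduct_self_eq_card {v : n → ℝ} (hv : ∀ j, v j = 1 ∨ v j = -1) :
    v ⬝ᵥ v = Fintype.card n := by
  have h : ∀ j, v j * v j = 1 := fun j => by rcases hv j with h | h <;> simp [h]
  simp [dotProduct, h]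

lemma dotProduct_mulVec_self_of_transpose_mul_self [DecidableEq n] {H : Matrix m n ℝ} {s : ℝ}
    (hH : Hᵀ * H = s • 1) (v : n → ℝ) : (H *ᵥ v) ⬝ᵥ (H *ᵥ v) = s * (v ⬝ᵥ v) := by
  rw [dotProduct_comm, dotProduct_mulVec, ← mulVec_transpose, mulVec_mulVec, hH, smul_mulVec,
    one_mulVec, smul_dotProduct, smul_eq_mul]

lemma sum_dotProduct_self_mulVec_of_transpose_mul_self [DecidableEq n] {H : Matrix m n ℝ} {s : ℝ}
    (hH : Hᵀ * H = s • 1) (R : Matrix κ n ℝ) :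
    ∑ t, (R *ᵥ H t) ⬝ᵥ (R *ᵥ H t) = s * ∑ a, R a ⬝ᵥ R a := by
  have hswap : ∀ t a, (R *ᵥ H t) a = (H *ᵥ R a) t := fun t a => dotProduct_comm _ _
  calc ∑ t, (R *ᵥ H t) ⬝ᵥ (R *ᵥ H t) = ∑ a, (H *ᵥ R a) ⬝ᵥ (H *ᵥ R a) := by
        simp only [dotProduct, hswap]
        exact Finset.sum_comm
    _ = s * ∑ a, R a ⬝ᵥ R a := by
        simp only [dotProduct_mulVec_self_of_transpose_mul_self hH, Finset.mul_sum]

theorem exists_mul_sqrt_card_le_of_vecMul_eq_smul [DecidableEq n] [Nonempty n] {H : Matrix n n ℝ}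
    (hsign : ∀ i j, H i j = 1 ∨ H i j = -1) (hHad : Hᵀ * H = (Fintype.card n : ℝ) • 1)
    {R : Matrix κ n ℝ} (hR : colNorm12 R ≤ 1) (ℓ : n → κ → ℝ) (c : n → ℝ)
    (hℓ : ∀ t, ℓ t ᵥ* R = c t • H t) :
    ∃ t, c t * √(Fintype.card n) ≤ √(ℓ t ⬝ᵥ ℓ t) := by
  set N : ℝ := (Fintype.card n : ℝ)
  have hN : 0 < N := by positivity
  have hsum : ∑ t, (R *ᵥ H t) ⬝ᵥ (R *ᵥ H t) ≤ ∑ _t : n, N := by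
    rw [sum_dotProduct_self_mulVec_of_transpose_mul_self hHad, Finset.sum_const,
      Finset.card_univ, nsmul_eq_mul]
    exact mul_le_mul_of_nonneg_left (sum_dotProduct_self_le_card_of_colNorm12_le_one hR) hN.le
  obtain ⟨t, -, ht⟩ := Finset.exists_le_of_sum_le Finset.univ_nonempty hsum
  refine ⟨t, le_of_mul_le_mul_right ?_ (Real.sqrt_pos.2 hN)⟩
  calc c t * √N * √N = ℓ t ⬝ᵥ (R *ᵥ H t) := by
        rw [mul_assoc, Real.mul_self_sqrt hN.le, dotProduct_mulVec, hℓ, smul_dotProduct,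
          dotProduct_self_eq_card (hsign t), smul_eq_mul]
    _ ≤ √(ℓ t ⬝ᵥ ℓ t) * √((R *ᵥ H t) ⬝ᵥ (R *ᵥ H t)) := dotProduct_le_sqrt_mul_sqrt _ _
    _ ≤ √(ℓ t ⬝ᵥ ℓ t) * √N := by gcongr

end Hadamard

lemma sqrt_two_pow_sq (k : ℕ) : (√2 ^ k) ^ 2 = 2 ^ k := by
  rw [← pow_mul, mul_comm, pow_mul, Real.sq_sqrt zero_le_two]

lemma sqrt_half_mul_sqrt_two_pow_succ (x : ℝ) (t : ℕ) : √(x / 2) * √2 ^ (t + 1) = √2 ^ t * √x := by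
  rw [pow_succ, mul_left_comm, ← Real.sqrt_mul' _ zero_le_two, div_mul_cancel₀ _ two_ne_zero,
    mul_comm]

lemma gamma2_le_sqrt_two_pow {m : ℕ} {β : Type*} [Fintype β] (M : Matrix (Fin m) β ℝ)
    (h : ∀ i j, |M i j| = √2 ^ (i : ℕ)) : gamma2 M ≤ √2 ^ m := by
  refine (gamma2_le_colNorm12 M).trans ?_
  rw [← Real.sqrt_sq (by positivity : 0 ≤ √2 ^ m), sqrt_two_pow_sq]
  refine colNorm12_le_sqrt fun j => ?_
  have hsq : ∀ i, M i j ^ 2 = 2 ^ (i : ℕ) := fun i => by rw [← sq_abs, h, sqrt_two_pow_sq]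
  simp only [hsq]
  rw [Fin.sum_univ_eq_sum_range (fun i => (2 : ℝ) ^ i) m, geom_sum_eq (by norm_num)]
  linarith

theorem stmt9 (n N : ℕ) (hN : N = 2 ^ n)
    (H : Matrix (Fin N) (Fin N) ℝ)
    (hent : ∀ i j, H i j = 1 ∨ H i j = -1)
    (hHad : Hᵀ * H = (N : ℝ) • 1)
    (Q : Matrix (Fin N) (Fin N) ℝ)
    (hQ : ∀ i j, Q i j = (2 : ℝ) ^ ((i : ℝ) / 2) * H i j) :
    -- `‖q₁‖_∞ = 1`
    (⨆ j, |Q ⟨0, by rw [hN]; positivity⟩ j|) = 1 ∧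
    -- `(N−1)/2 ≤ log₂ γ₂(Q) ≤ N/2`
    ((N : ℝ) - 1) / 2 ≤ Real.logb 2 (gamma2 Q) ∧ Real.logb 2 (gamma2 Q) ≤ (N : ℝ) / 2 ∧
    -- the online lower bound
    ∀ (kk : ℕ) (R : Matrix (Fin kk) (Fin N) ℝ), colNorm12 R ≤ 1 →
      ∀ ℓ : Fin N → (Fin kk → ℝ), (∀ t, Matrix.vecMul (ℓ t) R = Q t) →
        ∃ t : Fin N,
          Real.sqrt ((N : ℝ) / 2) *
              gamma2 (Matrix.of fun (i : Fin ((t : ℕ) + 1)) (j : Fin N) =>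
                Q (Fin.castLE t.isLt i) j) ≤
            Real.sqrt (∑ a, (ℓ t a) ^ 2) ∧
          Real.sqrt (Real.logb 2 (gamma2 Q)) *
              gamma2 (Matrix.of fun (i : Fin ((t : ℕ) + 1)) (j : Fin N) =>
                Q (Fin.castLE t.isLt i) j) ≤
            Real.sqrt (∑ a, (ℓ t a) ^ 2) := by
  have hN0 : 0 < N := hN ▸ Nat.two_pow_pos n
  have hpow : ∀ i : Fin N, (2 : ℝ) ^ ((i : ℝ) / 2) = √2 ^ (i : ℕ) := fun i => by
    rw [Real.rpow_div_two_eq_sqrt _ zero_le_two, Real.rpow_natCast]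
  have habsQ : ∀ i j, |Q i j| = √2 ^ (i : ℕ) := fun i j => by
    rw [hQ, hpow, abs_mul, (abs_eq zero_le_one).2 (hent i j), mul_one,
      abs_of_nonneg (by positivity)]
  have hupper : gamma2 Q ≤ 2 ^ ((N : ℝ) / 2) := by
    rw [Real.rpow_div_two_eq_sqrt _ zero_le_two, Real.rpow_natCast]
    exact gamma2_le_sqrt_two_pow Q habsQ
  have hlower : 2 ^ (((N : ℝ) - 1) / 2) ≤ gamma2 Q := by
    have := abs_apply_le_gamma2 Q ⟨N - 1, Nat.sub_lt hN0 one_pos⟩ ⟨0, hN0⟩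
    rwa [habsQ, ← hpow, Nat.cast_pred hN0] at this
  have hγ : 0 < gamma2 Q := (by positivity : (0 : ℝ) < _).trans_le hlower
  have hlog : Real.logb 2 (gamma2 Q) ≤ N / 2 := (Real.logb_le_iff_le_rpow one_lt_two hγ).2 hupper
  have : NeZero N := ⟨hN0.ne'⟩
  refine ⟨by simp only [habsQ, pow_zero, ciSup_const],
    (Real.le_logb_iff_rpow_le one_lt_two hγ).2 hlower, hlog, fun kk R hR ℓ hℓ => ?_⟩
  obtain ⟨t, ht⟩ := exists_mul_sqrt_card_le_of_vecMul_eq_smul hent (by simpa using hHad) hR ℓ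
    (fun t => √2 ^ (t : ℕ)) fun t => by ext j; simp [hℓ, hQ, hpow]
  rw [Fintype.card_fin, show ℓ t ⬝ᵥ ℓ t = ∑ a, ℓ t a ^ 2 by simp only [dotProduct, sq]] at ht
  have hprefix : √(N / 2) * gamma2 (Matrix.of fun (i : Fin ((t : ℕ) + 1)) (j : Fin N) =>
      Q (Fin.castLE t.isLt i) j) ≤ √(∑ a, ℓ t a ^ 2) :=
    calc _ ≤ √(N / 2) * √2 ^ ((t : ℕ) + 1) := by
          gcongr
          exact gamma2_le_sqrt_two_pow _ fun i j => habsQ _ _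
      _ = √2 ^ (t : ℕ) * √N := sqrt_half_mul_sqrt_two_pow_succ _ _
      _ ≤ _ := ht
  exact ⟨t, hprefix,
    (mul_le_mul_of_nonneg_right (Real.sqrt_le_sqrt hlog) (gamma2_nonneg _)).trans hprefix⟩
end

section
/- For every matrix Q ∈ [0,1]^{m×N} and all positive integers c and w with c·w ≤ N: hdisc*(Q, c·w) ≤ c·hdisc*(Q, w). -/
open Matrix

/-- The discrepancy of the columns of `Q` indexed by `S`: the minimum over ±1 colorings
of `S` of `‖Q_S x‖_∞`. -/
noncomputable def colDisc {m : ℕ} {β : Type*} [Fintype β] (Q : Matrix (Fin m) β ℝ)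
    (S : Finset β) : ℝ :=
  sInf { v : ℝ | ∃ x : β → ℝ, (∀ j ∈ S, x j = 1 ∨ x j = -1) ∧
    v = ⨆ i, |∑ j ∈ S, Q i j * x j| }

/-- The restricted hereditary discrepancy `hdisc(Q, w)`. -/
noncomputable def hdisc {m : ℕ} {β : Type*} [Fintype β] (Q : Matrix (Fin m) β ℝ)
    (w : ℕ) : ℝ :=
  sSup { v : ℝ | ∃ S : Finset β, S.card ≤ w ∧ v = colDisc Q S }

/-- `Q*`: the matrix `Q` with an all-ones row appended. -/
noncomputable def starMatrix {m : ℕ} {β : Type*} [Fintype β] (Q : Matrix (Fin m) β ℝ) :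
    Matrix (Fin (m + 1)) β ℝ :=
  Matrix.of fun i j => if h : (i : ℕ) < m then Q ⟨i, h⟩ j else 1

/-- The modified restricted hereditary discrepancy `hdisc*(Q, w)`. -/
noncomputable def hdiscStar {m : ℕ} {β : Type*} [Fintype β] (Q : Matrix (Fin m) β ℝ)
    (w : ℕ) : ℝ :=
  hdisc (starMatrix Q) w

/-!
Discrepancy is subadditive over disjoint unions: signings of `T` and `T'` glue to a signing
of `T ∪ T'` whose row sums are the sums of the two. A set of at most `c * w` columns splits
into `c` sets of at most `w` columns, so its discrepancy is at most `c * hdisc(Q, w)`. This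
holds for every real matrix, in particular for `Q*`.
-/

lemma iSup_abs_add_le {ι : Type*} [Finite ι] (f g : ι → ℝ) :
    ⨆ i, |f i + g i| ≤ (⨆ i, |f i|) + ⨆ i, |g i| :=
  Real.iSup_le
    (fun i => (abs_add_le _ _).trans <| add_le_add
      (le_ciSup (f := fun i => |f i|) (Set.finite_range _).bddAbove i)
      (le_ciSup (f := fun i => |g i|) (Set.finite_range _).bddAbove i))
    (add_nonneg (Real.iSup_nonneg fun _ => abs_nonneg _) (Real.iSup_nonneg fun _ => abs_nonneg _))

section Discrepancy

variable {m : ℕ} {β : Type*} [Fintype β] (A : Matrix (Fin m) β ℝ)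

lemma colDisc_le {S : Finset β} {x : β → ℝ} (hx : ∀ j ∈ S, x j = 1 ∨ x j = -1) :
    colDisc A S ≤ ⨆ i, |∑ j ∈ S, A i j * x j| :=
  csInf_le ⟨0, by rintro _ ⟨y, -, rfl⟩; exact Real.iSup_nonneg fun _ => abs_nonneg _⟩
    ⟨x, hx, rfl⟩

lemma le_colDisc {S : Finset β} {r : ℝ}
    (h : ∀ x : β → ℝ, (∀ j ∈ S, x j = 1 ∨ x j = -1) → r ≤ ⨆ i, |∑ j ∈ S, A i j * x j|) :
    r ≤ colDisc A S :=
  le_csInf ⟨_, fun _ => 1, fun _ _ => Or.inl rfl, rfl⟩ (by rintro _ ⟨x, hx, rfl⟩; exact h x hx)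

lemma colDisc_nonneg (S : Finset β) : 0 ≤ colDisc A S :=
  le_colDisc A fun _ _ => Real.iSup_nonneg fun _ => abs_nonneg _

lemma colDisc_empty_le : colDisc A ∅ ≤ 0 := by
  simpa using colDisc_le A (S := ∅) (x := fun _ => 1) (by simp)

lemma colDisc_union_le [DecidableEq β] {T T' : Finset β} (hd : Disjoint T T') :
    colDisc A (T ∪ T') ≤ colDisc A T + colDisc A T' := by
  have glue : ∀ x x' : β → ℝ, (∀ j ∈ T, x j = 1 ∨ x j = -1) →
      (∀ j ∈ T', x' j = 1 ∨ x' j = -1) →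
      colDisc A (T ∪ T') ≤ (⨆ i, |∑ j ∈ T, A i j * x j|) + ⨆ i, |∑ j ∈ T', A i j * x' j| := by
    intro x x' hx hx'
    have hsign : ∀ j ∈ T ∪ T', T.piecewise x x' j = 1 ∨ T.piecewise x x' j = -1 := by
      intro j hj
      by_cases hjT : j ∈ T
      · simpa [hjT] using hx j hjT
      · simpa [hjT] using hx' j ((Finset.mem_union.1 hj).resolve_left hjT)
    have hsum : ∀ i, ∑ j ∈ T ∪ T', A i j * T.piecewise x x' j
        = ∑ j ∈ T, A i j * x j + ∑ j ∈ T', A i j * x' j := by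
      intro i
      rw [Finset.sum_union hd]
      congr 1
      · exact Finset.sum_congr rfl fun j hj => by rw [Finset.piecewise_eq_of_mem _ _ _ hj]
      · exact Finset.sum_congr rfl fun j hj => by
          rw [Finset.piecewise_eq_of_notMem _ _ _ (Finset.disjoint_right.1 hd hj)]
    calc colDisc A (T ∪ T') ≤ ⨆ i, |∑ j ∈ T ∪ T', A i j * T.piecewise x x' j| :=
          colDisc_le A hsign
      _ ≤ _ := by simp only [hsum]; exact iSup_abs_add_le _ _
  have : colDisc A (T ∪ T') - colDisc A T' ≤ colDisc A T :=
    le_colDisc A fun x hx =>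
      sub_le_comm.1 <| le_colDisc A fun x' hx' => sub_le_iff_le_add'.2 (glue x x' hx hx')
  linarith

lemma colDisc_le_hdisc {w : ℕ} {S : Finset β} (hS : S.card ≤ w) : colDisc A S ≤ hdisc A w :=
  le_csSup
    ((Set.finite_range (colDisc A)).subset (by rintro _ ⟨S, -, rfl⟩; exact ⟨S, rfl⟩)).bddAbove
    ⟨S, hS, rfl⟩

lemma hdisc_nonneg (w : ℕ) : 0 ≤ hdisc A w :=
  Real.sSup_nonneg <| by rintro _ ⟨S, -, rfl⟩; exact colDisc_nonneg A S

lemma colDisc_le_mul_hdisc (w : ℕ) :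
    ∀ (c : ℕ) (S : Finset β), S.card ≤ c * w → colDisc A S ≤ c * hdisc A w
  | 0, S, hS => by
    obtain rfl : S = ∅ := Finset.card_eq_zero.1 (by simpa using hS)
    simpa using colDisc_empty_le A
  | c + 1, S, hS => by
    classical
    obtain ⟨T, hTS, hT⟩ := Finset.exists_subset_card_eq (min_le_right w S.card)
    have hrest : (S \ T).card ≤ c * w := by
      rw [Finset.card_sdiff_of_subset hTS, hT]
      rw [Nat.succ_mul] at hS
      omega
    calc colDisc A S = colDisc A (T ∪ (S \ T)) := by rw [Finset.union_sdiff_of_subset hTS]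
      _ ≤ colDisc A T + colDisc A (S \ T) := colDisc_union_le A Finset.disjoint_sdiff
      _ ≤ hdisc A w + c * hdisc A w :=
          add_le_add (colDisc_le_hdisc A (hT.trans_le (min_le_left _ _)))
            (colDisc_le_mul_hdisc w c _ hrest)
      _ = ((c + 1 : ℕ) : ℝ) * hdisc A w := by push_cast; ring

lemma hdisc_mul_le (c w : ℕ) : hdisc A (c * w) ≤ c * hdisc A w :=
  Real.sSup_le (by rintro _ ⟨S, hS, rfl⟩; exact colDisc_le_mul_hdisc A w c S hS)
    (mul_nonneg c.cast_nonneg (hdisc_nonneg A w))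

end Discrepancy

theorem stmt13_general {m N : ℕ} (Q : Matrix (Fin m) (Fin N) ℝ)
    (c w : ℕ) :
    hdiscStar Q (c * w) ≤ (c : ℝ) * hdiscStar Q w :=
  hdisc_mul_le (starMatrix Q) c w

theorem stmt13 {m N : ℕ} (Q : Matrix (Fin m) (Fin N) ℝ)
    (hQ : ∀ i j, Q i j ∈ Set.Icc (0 : ℝ) 1)
    (c w : ℕ) (hc : 1 ≤ c) (hw : 1 ≤ w) (hcw : c * w ≤ N) :
    hdiscStar Q (c * w) ≤ (c : ℝ) * hdiscStar Q w :=
  stmt13_general Q c w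
end

section
/- For every α ∈ (0,1), every m ≥ 1, every finite universe U, every tuple Q = (q_1,…,q_m) of statistical queries on U, every n ∈ ℕ with n ≥ 1, and every dataset x ∈ U^n, there exist a positive integer s ≤ ⌈ln(2m)/(2α²)⌉ + 1 and a dataset y ∈ U^s such that max_{i∈{1,…,m}} |q_i(x) − q_i(y)| ≤ α. -/
/-!
Draw `s` indices into the dataset `x` independently and uniformly at random. For each query the
sum of its values on the sample is a sum of `s` independent `[0,1]`-valued variables, so by
Hoeffding's inequality the empirical mean is more than `α` away from `q i x` with probability at
most `2 exp (-2 s α²)`. A union bound over the `m` queries bounds the failure probability by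
`2 m exp (-2 s α²)`, which is `< 1` as soon as `s > log (2m) / (2 α²)`; hence some sample works.
-/

open MeasureTheory ProbabilityTheory Real Finset

section Sampling

variable {α : Type*} [MeasurableSpace α] {ν : Measure α} [IsProbabilityMeasure ν]
  {f : α → ℝ} {a b : ℝ}

lemma measureReal_pi_le_sum_sub_integral (hf : Measurable f) (hab : ∀ x, f x ∈ Set.Icc a b)
    (s : ℕ) {ε : ℝ} (hε : 0 ≤ ε) :
    (Measure.pi fun _ : Fin s ↦ ν).real {ω | s * ε ≤ ∑ j, (f (ω j) - ∫ x, f x ∂ν)}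
      ≤ exp (-2 * s * ε ^ 2 / (b - a) ^ 2) := by
  set μ := Measure.pi fun _ : Fin s ↦ ν
  have hsubG : ∀ j ∈ (univ : Finset (Fin s)), HasSubgaussianMGF
      (fun ω : Fin s → α ↦ f (ω j) - ∫ x, f x ∂ν) ((‖b - a‖₊ / 2) ^ 2) μ := by
    intro j _
    have h := hasSubgaussianMGF_of_mem_Icc (hf.comp (measurable_pi_apply j)).aemeasurable
      (ae_of_all μ fun ω ↦ hab (ω j))
    rwa [Function.comp_def, integral_comp_eval hf.aestronglyMeasurable] at h
  have hindep : iIndepFun (fun j (ω : Fin s → α) ↦ f (ω j) - ∫ x, f x ∂ν) μ :=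
    iIndepFun_pi fun _ ↦ (hf.sub_const _).aemeasurable
  refine (HasSubgaussianMGF.measure_sum_ge_le_of_iIndepFun hindep hsubG
    (by positivity)).trans_eq ?_
  congr 1
  simp only [sum_const, card_univ, Fintype.card_fin, nsmul_eq_mul, NNReal.coe_mul,
    NNReal.coe_natCast, NNReal.coe_pow, NNReal.coe_div, coe_nnnorm, Real.norm_eq_abs,
    NNReal.coe_ofNat, div_pow, sq_abs]
  rcases eq_or_ne (s : ℝ) 0 with hs | hs
  · simp [hs]
  rcases eq_or_ne ((b - a) ^ 2) 0 with hba | hba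
  · simp [hba]
  field_simp

lemma measureReal_pi_le_abs_sum_sub_integral (hf : Measurable f) (hab : ∀ x, f x ∈ Set.Icc a b)
    (s : ℕ) {ε : ℝ} (hε : 0 ≤ ε) :
    (Measure.pi fun _ : Fin s ↦ ν).real {ω | s * ε ≤ |∑ j, (f (ω j) - ∫ x, f x ∂ν)|}
      ≤ 2 * exp (-2 * s * ε ^ 2 / (b - a) ^ 2) := by
  have hneg := measureReal_pi_le_sum_sub_integral (ν := ν) hf.neg
    (fun x ↦ ⟨neg_le_neg (hab x).2, neg_le_neg (hab x).1⟩) s hε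
  have hpos := measureReal_pi_le_sum_sub_integral (ν := ν) hf hab s hε
  have hsum (ω : Fin s → α) :
      ∑ j, ((-f) (ω j) - ∫ x, (-f) x ∂ν) = -∑ j, (f (ω j) - ∫ x, f x ∂ν) := by
    simp only [Pi.neg_apply, integral_neg, neg_sub_neg, ← sum_neg_distrib, neg_sub]
  simp only [hsum, show -a - -b = b - a by ring] at hneg
  calc (Measure.pi fun _ : Fin s ↦ ν).real {ω | s * ε ≤ |∑ j, (f (ω j) - ∫ x, f x ∂ν)|}
      ≤ (Measure.pi fun _ : Fin s ↦ ν).real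
        ({ω | s * ε ≤ ∑ j, (f (ω j) - ∫ x, f x ∂ν)} ∪
          {ω | s * ε ≤ -∑ j, (f (ω j) - ∫ x, f x ∂ν)}) :=
        measureReal_mono fun _ ↦ by simpa only [Set.mem_union, Set.mem_ofPred_eq] using le_abs.1
    _ ≤ _ := measureReal_union_le _ _
    _ ≤ 2 * exp (-2 * s * ε ^ 2 / (b - a) ^ 2) := by linarith

lemma exists_forall_abs_sum_sub_integral_lt {ι : Type*} [Fintype ι] {q : ι → α → ℝ}
    (hq : ∀ i, Measurable (q i)) (hab : ∀ i x, q i x ∈ Set.Icc a b) {s : ℕ} {ε : ℝ} (hε : 0 ≤ ε)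
    (hsmall : 2 * Fintype.card ι * exp (-2 * s * ε ^ 2 / (b - a) ^ 2) < 1) :
    ∃ ω : Fin s → α, ∀ i, |∑ j, (q i (ω j) - ∫ x, q i x ∂ν)| < s * ε := by
  set bad := ⋃ i, {ω : Fin s → α | s * ε ≤ |∑ j, (q i (ω j) - ∫ x, q i x ∂ν)|}
  have hbad : (Measure.pi fun _ : Fin s ↦ ν).real bad < 1 := calc
    _ ≤ ∑ i, (Measure.pi fun _ : Fin s ↦ ν).real
          {ω | s * ε ≤ |∑ j, (q i (ω j) - ∫ x, q i x ∂ν)|} := measureReal_iUnion_fintype_le _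
    _ ≤ ∑ _i : ι, 2 * exp (-2 * s * ε ^ 2 / (b - a) ^ 2) :=
        sum_le_sum fun i _ ↦ measureReal_pi_le_abs_sum_sub_integral (hq i) (hab i) s hε
    _ = 2 * Fintype.card ι * exp (-2 * s * ε ^ 2 / (b - a) ^ 2) := by
        rw [sum_const, card_univ, nsmul_eq_mul]; ring
    _ < 1 := hsmall
  obtain ⟨ω, hω⟩ : ∃ ω, ω ∉ bad := by
    by_contra! h
    simp [Set.eq_univ_of_forall h] at hbad
  simp only [bad, Set.mem_iUnion, Set.mem_ofPred_eq, not_exists, not_le] at hω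
  exact ⟨ω, hω⟩

end Sampling

lemma mul_exp_neg_mul_lt_one {K c t : ℝ} (hK : 0 ≤ K) (hc : 0 < c) (ht : log K / c < t) :
    K * exp (-(c * t)) < 1 := by
  rcases hK.eq_or_lt with rfl | hK
  · simp
  rw [← exp_log hK, ← exp_add, exp_lt_one_iff]
  linarith [(div_lt_iff₀ hc).1 ht]

lemma abs_sub_sum_div_le_of_abs_sum_sub_lt {s : ℕ} (hs : 0 < s) {c ε : ℝ} {y : Fin s → ℝ}
    (h : |∑ j, (y j - c)| < s * ε) : |c - (∑ j, y j) / s| ≤ ε := by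
  have hs' : (0 : ℝ) < s := by exact_mod_cast hs
  rw [sum_sub_distrib, sum_const, card_univ, Fintype.card_fin, nsmul_eq_mul] at h
  rw [abs_sub_comm, show (∑ j, y j) / s - c = (∑ j, y j - s * c) / s by field_simp,
    abs_div, abs_of_pos hs', div_le_iff₀ hs']
  linarith

theorem stmt14_general (α : ℝ) (hα : α ∈ Set.Ioo (0 : ℝ) 1) (m : ℕ)
    (U : Type) (q : Fin m → U → ℝ)
    (hq : ∀ i u, q i u ∈ Set.Icc (0 : ℝ) 1)
    (n : ℕ) (hn : 1 ≤ n) (x : Fin n → U) :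
    ∃ s : ℕ, 1 ≤ s ∧ s ≤ ⌈Real.log (2 * m) / (2 * α ^ 2)⌉₊ + 1 ∧
      ∃ y : Fin s → U,
        ∀ i, |(∑ a, q i (x a)) / n - (∑ b, q i (y b)) / s| ≤ α := by
  have : NeZero n := ⟨by omega⟩
  set ν := (PMF.uniformOfFintype (Fin n)).toMeasure
  set s := ⌈log (2 * m) / (2 * α ^ 2)⌉₊ + 1
  have hsmall : 2 * m * exp (-(2 * α ^ 2 * s)) < 1 :=
    mul_exp_neg_mul_lt_one (by positivity) (by nlinarith [hα.1])
      ((Nat.le_ceil _).trans_lt (by simp [s]))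
  obtain ⟨ω, hω⟩ := exists_forall_abs_sum_sub_integral_lt (ν := ν) (q := fun i a ↦ q i (x a))
    (fun _ ↦ .of_discrete) (fun i a ↦ hq i (x a)) hα.1.le
    (by convert hsmall using 3 <;> simp; ring)
  refine ⟨s, by omega, le_rfl, x ∘ ω, fun i ↦ ?_⟩
  have hmean : ∫ a, q i (x a) ∂ν = (∑ a, q i (x a)) / n := by
    simp [ν, PMF.integral_eq_sum, PMF.uniformOfFintype_apply, ← mul_sum, div_eq_inv_mul]
  exact hmean ▸ abs_sub_sum_div_le_of_abs_sum_sub_lt (by omega) (hω i)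

theorem stmt14 (α : ℝ) (hα : α ∈ Set.Ioo (0 : ℝ) 1) (m : ℕ) (hm : 1 ≤ m)
    (U : Type) [Fintype U] (q : Fin m → U → ℝ)
    (hq : ∀ i u, q i u ∈ Set.Icc (0 : ℝ) 1)
    (n : ℕ) (hn : 1 ≤ n) (x : Fin n → U) :
    ∃ s : ℕ, 1 ≤ s ∧ s ≤ ⌈Real.log (2 * m) / (2 * α ^ 2)⌉₊ + 1 ∧
      ∃ y : Fin s → U,
        ∀ i, |(∑ a, q i (x a)) / n - (∑ b, q i (y b)) / s| ≤ α :=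
  stmt14_general α hα m U q hq n hn x
end

section
/- Let α ∈ (0,1), let U be a finite universe of size N, let Q = (q_1,…,q_m) be a tuple of statistical queries on U with query matrix Q ∈ [0,1]^{m×N}, and let n be a positive integer with n ≤ N such that hdisc*(Q, n) ≤ αn/4. Then for every dataset x ∈ U^n whose n elements are pairwise distinct, there exist a positive integer s ≤ 5·hdisc*(Q, n)/α and a dataset y ∈ U^s such that ‖Q(x) − Q(y)‖_∞ ≤ α. -/
/-!
Halve the dataset repeatedly. A coloring of `S` with discrepancy at most `H` for `Q*` splits
`S` into two parts whose sizes differ by at most `H` (the all-ones row) and whose query sums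
differ by at most `H`, so either part has all query averages within `2H/|S|` of those of `S`.
Keeping the smaller part and stopping once `|S| ≤ 5H/α`, the errors form a geometric series
dominated by its last term, which is below `2α/5`; the total error is below `4α/5`.
-/

open Matrix

open Finset

lemma sum_mul_sign_eq_sub {U : Type*} [DecidableEq U] (f x : U → ℝ) {S : Finset U}
    (hx : ∀ j ∈ S, x j = 1 ∨ x j = -1) :
    ∑ j ∈ S, f j * x j =
      ∑ j ∈ S.filter (x · = 1), f j - ∑ j ∈ S \ S.filter (x · = 1), f j := by
  have hplus : ∑ j ∈ S.filter (x · = 1), f j * x j = ∑ j ∈ S.filter (x · = 1), f j :=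
    sum_congr rfl fun j hj => by rw [(mem_filter.1 hj).2, mul_one]
  have hminus :
      ∑ j ∈ S \ S.filter (x · = 1), f j * x j = -∑ j ∈ S \ S.filter (x · = 1), f j := by
    rw [← sum_neg_distrib]
    refine sum_congr rfl fun j hj => ?_
    obtain ⟨hjS, hj⟩ := mem_sdiff.1 hj
    rw [(hx j hjS).resolve_left fun h => hj (mem_filter.2 ⟨hjS, h⟩), mul_neg_one]
  rw [← sum_sdiff (filter_subset (x · = 1) S), hplus, hminus]
  ring

section Discrepancy

variable {m : ℕ} {U : Type*} [Fintype U]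

lemma exists_subset_abs_sum_sub_sum_sdiff_le_colDisc [DecidableEq U]
    (Q : Matrix (Fin m) U ℝ) (S : Finset U) :
    ∃ P ⊆ S, ∀ i, |∑ j ∈ P, Q i j - ∑ j ∈ S \ P, Q i j| ≤ colDisc Q S := by
  set A := {v : ℝ | ∃ x : U → ℝ, (∀ j ∈ S, x j = 1 ∨ x j = -1) ∧
    v = ⨆ i, |∑ j ∈ S, Q i j * x j|}
  have hA :
      A ⊆ (fun P => ⨆ i, |∑ j ∈ P, Q i j - ∑ j ∈ S \ P, Q i j|) '' ↑S.powerset := by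
    rintro _ ⟨x, hx, rfl⟩
    exact ⟨S.filter (x · = 1), mem_powerset.2 (filter_subset _ _), by
      simp only [sum_mul_sign_eq_sub _ _ hx]⟩
  obtain ⟨x, hx, hmin⟩ : colDisc Q S ∈ A :=
    Set.Nonempty.csInf_mem ⟨_, fun _ => 1, fun _ _ => Or.inl rfl, rfl⟩
      ((S.powerset.finite_toSet.image _).subset hA)
  refine ⟨S.filter (x · = 1), filter_subset _ _, fun i => ?_⟩
  rw [hmin, ← sum_mul_sign_eq_sub _ _ hx]
  exact le_ciSup (f := fun i => |∑ j ∈ S, Q i j * x j|) (Set.finite_range _).bddAbove i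

lemma colDisc_nonneg_s16 (Q : Matrix (Fin m) U ℝ) (S : Finset U) : 0 ≤ colDisc Q S :=
  Real.sInf_nonneg <| by
    rintro _ ⟨x, -, rfl⟩
    exact Real.iSup_nonneg fun i => abs_nonneg _

lemma colDisc_le_sum_abs (Q : Matrix (Fin m) U ℝ) (S : Finset U) :
    colDisc Q S ≤ ∑ i, ∑ j, |Q i j| := by
  have hbdd : BddBelow {v : ℝ | ∃ x : U → ℝ, (∀ j ∈ S, x j = 1 ∨ x j = -1) ∧
      v = ⨆ i, |∑ j ∈ S, Q i j * x j|} := by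
    refine ⟨0, ?_⟩
    rintro _ ⟨x, -, rfl⟩
    exact Real.iSup_nonneg fun i => abs_nonneg _
  refine (csInf_le hbdd ⟨fun _ => 1, fun _ _ => Or.inl rfl, rfl⟩).trans <|
    Real.iSup_le (fun i => ?_) (by positivity)
  calc |∑ j ∈ S, Q i j * 1| ≤ ∑ j ∈ S, |Q i j| := by
        simpa only [mul_one] using abs_sum_le_sum_abs (fun j => Q i j) S
    _ ≤ ∑ j, |Q i j| := sum_le_sum_of_subset_of_nonneg (subset_univ S) fun _ _ _ => abs_nonneg _
    _ ≤ ∑ i, ∑ j, |Q i j| :=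
        single_le_sum (f := fun i => ∑ j, |Q i j|) (fun _ _ => by positivity) (mem_univ i)

lemma colDisc_le_hdisc_s16 (Q : Matrix (Fin m) U ℝ) {S : Finset U} {w : ℕ} (hS : #S ≤ w) :
    colDisc Q S ≤ hdisc Q w :=
  le_csSup ⟨∑ i, ∑ j, |Q i j|, by rintro _ ⟨T, -, rfl⟩; exact colDisc_le_sum_abs Q T⟩
    ⟨S, hS, rfl⟩

@[simp]
lemma starMatrix_last (Q : Matrix (Fin m) U ℝ) (j : U) : starMatrix Q (Fin.last m) j = 1 := by
  simp [starMatrix]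

@[simp]
lemma starMatrix_castSucc (Q : Matrix (Fin m) U ℝ) (i : Fin m) (j : U) :
    starMatrix Q i.castSucc j = Q i j := by
  simp [starMatrix]

end Discrepancy

lemma abs_add_div_add_sub_div_le {t t' A A' H : ℝ} (ht : 0 < t) (ht' : 0 ≤ t')
    (hA : 0 ≤ A) (hAt : A ≤ t) (htt' : |t - t'| ≤ H) (hAA' : |A - A'| ≤ H) :
    |(A + A') / (t + t') - A / t| ≤ 2 * H / (t + t') := by
  have hk : 0 < t + t' := by linarith
  have hform :
      (A + A') / (t + t') - A / t = (t * (A' - A) + (t - t') * A) / ((t + t') * t) := by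
    field_simp
    ring
  have hnum : |t * (A' - A) + (t - t') * A| ≤ 2 * H * t :=
    calc |t * (A' - A) + (t - t') * A| ≤ |t * (A' - A)| + |(t - t') * A| := abs_add_le _ _
      _ = t * |A - A'| + |t - t'| * A := by
        rw [abs_mul, abs_mul, abs_of_pos ht, abs_of_nonneg hA, abs_sub_comm A']
      _ ≤ t * H + H * t := by gcongr; exact (abs_nonneg _).trans htt'
      _ = 2 * H * t := by ring
  rw [hform, abs_div, abs_of_pos (mul_pos hk ht), div_le_div_iff₀ (mul_pos hk ht) hk]
  calc |t * (A' - A) + (t - t') * A| * (t + t') ≤ 2 * H * t * (t + t') := by gcongr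
    _ = 2 * H * ((t + t') * t) := by ring

lemma sum_le_card_of_mem_Icc {m : ℕ} {U : Type*} {Q : Matrix (Fin m) U ℝ}
    (hQ : ∀ i j, Q i j ∈ Set.Icc (0 : ℝ) 1) (i : Fin m) (T : Finset U) :
    ∑ j ∈ T, Q i j ≤ #T := by
  simpa using sum_le_card_nsmul T (Q i) 1 fun j _ => (hQ i j).2

section Halving

variable {m : ℕ} {U : Type*} [Fintype U] [DecidableEq U] {Q : Matrix (Fin m) U ℝ}

lemma avg_sub_avg_le_of_split (hQ : ∀ i j, Q i j ∈ Set.Icc (0 : ℝ) 1) {S P : Finset U}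
    {H : ℝ} (hPS : P ⊆ S)
    (hsplit : ∀ i, |∑ j ∈ P, starMatrix Q i j - ∑ j ∈ S \ P, starMatrix Q i j| ≤ H)
    (hHS : H < #S) :
    0 < #P ∧ ∀ i, |(∑ j ∈ S, Q i j) / #S - (∑ j ∈ P, Q i j) / #P| ≤ 2 * H / #S := by
  have hcard : (#P : ℝ) + #(S \ P) = #S := by
    rw [add_comm]; exact_mod_cast card_sdiff_add_card_eq_card hPS
  have hsize : |(#P : ℝ) - #(S \ P)| ≤ H := by simpa using hsplit (Fin.last m)
  have hP : (0 : ℝ) < #P := by linarith [abs_le.1 hsize]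
  refine ⟨by exact_mod_cast hP, fun i => ?_⟩
  have hrow : |∑ j ∈ P, Q i j - ∑ j ∈ S \ P, Q i j| ≤ H := by
    simpa using hsplit i.castSucc
  rw [← sum_sdiff hPS, add_comm, ← hcard]
  exact abs_add_div_add_sub_div_le hP (Nat.cast_nonneg _)
    (sum_nonneg fun j _ => (hQ i j).1) (sum_le_card_of_mem_Icc hQ i P) hsize hrow

lemma exists_subset_two_mul_card_le_avg_close (hQ : ∀ i j, Q i j ∈ Set.Icc (0 : ℝ) 1)
    {S : Finset U} {H : ℝ} (hS : colDisc (starMatrix Q) S ≤ H) (hHS : H < #S) :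
    ∃ T ⊆ S, 0 < #T ∧ 2 * #T ≤ #S ∧
      ∀ i, |(∑ j ∈ S, Q i j) / #S - (∑ j ∈ T, Q i j) / #T| ≤ 2 * H / #S := by
  obtain ⟨P, hPS, hP⟩ := exists_subset_abs_sum_sub_sum_sdiff_le_colDisc (starMatrix Q) S
  have hsplit i := (hP i).trans hS
  by_cases hsmall : 2 * #P ≤ #S
  · obtain ⟨hpos, hclose⟩ := avg_sub_avg_le_of_split hQ hPS hsplit hHS
    exact ⟨P, hPS, hpos, hsmall, hclose⟩
  · have hsplit' :
        ∀ i, |∑ j ∈ S \ P, starMatrix Q i j - ∑ j ∈ S \ (S \ P), starMatrix Q i j|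
          ≤ H := by
      intro i
      rw [Finset.sdiff_sdiff_eq_self hPS, abs_sub_comm]
      exact hsplit i
    obtain ⟨hpos, hclose⟩ := avg_sub_avg_le_of_split hQ sdiff_subset hsplit' hHS
    refine ⟨S \ P, sdiff_subset, hpos, ?_, hclose⟩
    have := card_sdiff_add_card_eq_card hPS
    omega

-- The slack `- 2 * H / #S` pays for the next halving step: that step costs `2H/#S`, and
-- passing to a set of at most half the size lowers the slack by at least `2H/#S`.
theorem exists_small_subset_avg_close (hQ : ∀ i j, Q i j ∈ Set.Icc (0 : ℝ) 1) {H δ : ℝ}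
    (hδ : δ ≤ 1) (S : Finset U) (hSne : S.Nonempty)
    (hcol : ∀ T ⊆ S, colDisc (starMatrix Q) T ≤ H) :
    ∃ T ⊆ S, T.Nonempty ∧ δ * #T ≤ H ∧
      ∀ i, |(∑ j ∈ S, Q i j) / #S - (∑ j ∈ T, Q i j) / #T| ≤
        max 0 (4 * δ - 2 * H / #S) := by
  induction S using Finset.strongInduction with
  | H S ih =>
  by_cases hstop : δ * #S ≤ H
  · exact ⟨S, subset_rfl, hSne, hstop, fun i => by simp⟩
  push Not at hstop
  have hH : 0 ≤ H := (colDisc_nonneg_s16 _ _).trans (hcol ∅ (empty_subset _))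
  have hS : (0 : ℝ) < #S := by exact_mod_cast hSne.card_pos
  obtain ⟨T₁, hT₁S, hT₁pos, hT₁half, hT₁close⟩ :=
    exists_subset_two_mul_card_le_avg_close hQ (hcol S subset_rfl) (by nlinarith)
  have hT₁ : (0 : ℝ) < #T₁ := by exact_mod_cast hT₁pos
  obtain ⟨T, hTT₁, hTne, hTsmall, hTclose⟩ :=
    ih T₁ (Finset.ssubset_iff_subset_ne.2 ⟨hT₁S, by rintro rfl; omega⟩)
      (card_pos.1 hT₁pos) fun T hT => hcol T (hT.trans hT₁S)
  refine ⟨T, hTT₁.trans hT₁S, hTne, hTsmall, fun i => le_max_of_le_right ?_⟩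
  have hhalf : 4 * H / #S ≤ 2 * H / #T₁ := by
    rw [div_le_div_iff₀ hS hT₁]
    have : (2 * #T₁ : ℝ) ≤ #S := by exact_mod_cast hT₁half
    nlinarith
  have hlast : 4 * H / #S ≤ 4 * δ := by
    rw [div_le_iff₀ hS]
    linarith
  calc _ ≤ |(∑ j ∈ S, Q i j) / #S - (∑ j ∈ T₁, Q i j) / #T₁|
        + |(∑ j ∈ T₁, Q i j) / #T₁ - (∑ j ∈ T, Q i j) / #T| := abs_sub_le _ _ _
    _ ≤ 2 * H / #S + (4 * δ - 4 * H / #S) :=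
        add_le_add (hT₁close i) ((hTclose i).trans (max_le (by linarith) (by linarith)))
    _ = 4 * δ - 2 * H / #S := by ring

end Halving

theorem stmt16_general (α : ℝ) (hα : α ∈ Set.Ioo (0 : ℝ) 1)
    (U : Type) [Fintype U] (m : ℕ)
    (q : Fin m → U → ℝ) (hq : ∀ i u, q i u ∈ Set.Icc (0 : ℝ) 1)
    (n : ℕ) (hn1 : 1 ≤ n)
    (x : Fin n → U) (hx : Function.Injective x) :
    ∃ s : ℕ, 1 ≤ s ∧ (s : ℝ) ≤ 5 * hdiscStar (Matrix.of fun i u => q i u) n / α ∧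
      ∃ y : Fin s → U,
        ∀ i, |(∑ a, q i (x a)) / n - (∑ b, q i (y b)) / s| ≤ α := by
  classical
  obtain ⟨hα0, hα1⟩ := hα
  set H := hdiscStar (Matrix.of fun i u => q i u) n
  set S := univ.image x
  have hS : #S = n := by simp [S, card_image_of_injective _ hx]
  have hH : 0 ≤ H := (colDisc_nonneg_s16 _ ∅).trans (colDisc_le_hdisc_s16 _ (by simp))
  obtain ⟨T, -, hTne, hTsmall, hTclose⟩ :=
    exists_small_subset_avg_close (Q := Matrix.of fun i u => q i u) (H := H) (δ := α / 5) hq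
      (by linarith) S (card_pos.1 (by omega))
      fun T hT => colDisc_le_hdisc_s16 _ ((card_le_card hT).trans hS.le)
  refine ⟨#T, hTne.card_pos, by rw [le_div_iff₀ hα0]; linarith, fun b => T.equivFin.symm b,
    fun i => ?_⟩
  have hsx : ∑ a, q i (x a) = ∑ u ∈ S, q i u := (sum_image fun a _ b _ h => hx h).symm
  have hsy : ∑ b, q i (T.equivFin.symm b) = ∑ u ∈ T, q i u := by
    rw [Equiv.sum_comp T.equivFin.symm (fun u : T => q i u), sum_coe_sort T (q i)]
  rw [hsx, hsy, ← hS]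
  refine (hTclose i).trans (max_le hα0.le ?_)
  have : 0 ≤ 2 * H / #S := by positivity
  linarith

theorem stmt16 (α : ℝ) (hα : α ∈ Set.Ioo (0 : ℝ) 1)
    (U : Type) [Fintype U] (m : ℕ)
    (q : Fin m → U → ℝ) (hq : ∀ i u, q i u ∈ Set.Icc (0 : ℝ) 1)
    (n : ℕ) (hn1 : 1 ≤ n) (hnN : n ≤ Fintype.card U)
    (hH : hdiscStar (Matrix.of fun i u => q i u) n ≤ α * n / 4)
    (x : Fin n → U) (hx : Function.Injective x) :
    ∃ s : ℕ, 1 ≤ s ∧ (s : ℝ) ≤ 5 * hdiscStar (Matrix.of fun i u => q i u) n / α ∧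
      ∃ y : Fin s → U,
        ∀ i, |(∑ a, q i (x a)) / n - (∑ b, q i (y b)) / s| ≤ α :=
  stmt16_general α hα U m q hq n hn1 x hx
end
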